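/- arXiv:0804.2784 — 6 statements merged into one kernel-verified Lean document; each statement's English description precedes it below -/
import Mathlib

section
/- Let (M, Ω, ω) be a locally conformal symplectic manifold and Q ⊂ M a submanifold such that the dimension of (T_qQ)^Ω ∩ T_qQ is constant in q. Then the characteristic distribution (TQ)^Ω ∩ TQ is involutive: the Lie bracket of any two smooth sections of (TQ)^Ω ∩ TQ is again a section of (TQ)^Ω ∩ TQ. -/
noncomputable section

open scoped BigOperators

/-- A (not yet packaged) `p`-form on a real normed space `E`: a function assigning to each
point a function on `p`-tuples of tangent vectors. -/
abbrev DForm (E : Type*) [NormedAddCommGroup E] [NormedSpace ℝ E] (p : ℕ) :=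
  E → (Fin p → E) → ℝ

variable {E F' : Type*} [NormedAddCommGroup E] [NormedSpace ℝ E]
  [NormedAddCommGroup F'] [NormedSpace ℝ F']

/-- `ω` is pointwise a continuous alternating multilinear map. -/
def IsFormPt {p : ℕ} (ω : DForm E p) : Prop :=
  ∀ x, ∃ A : E [⋀^Fin p]→ₗ[ℝ] ℝ, (⇑A : (Fin p → E) → ℝ) = ω x

/-- Smooth differential `p`-form. -/
def SmoothForm {p : ℕ} (ω : DForm E p) : Prop :=
  (∀ v : Fin p → E, ContDiff ℝ (⊤ : ℕ∞) fun x => ω x v) ∧ IsFormPt ω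

/-- The exterior derivative, via the coordinate formula. -/
def extD {p : ℕ} (ω : DForm E p) : DForm E (p + 1) := fun x v =>
  ∑ i : Fin (p + 1), (-1 : ℝ) ^ (i : ℕ) *
    fderiv ℝ (fun y => ω y (v ∘ i.succAbove)) x (v i)

/-- Pullback of a `p`-form along a smooth map. -/
def pullD {p : ℕ} (j : F' → E) (ω : DForm E p) : DForm F' p := fun y v =>
  ω (j y) fun i => fderiv ℝ j y (v i)

/-- `ω` vanishes whenever all its arguments are tangent to the distribution `D`. -/
def TangVanish {p : ℕ} (D : E → Submodule ℝ E) (ω : DForm E p) : Prop :=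
  ∀ x (v : Fin p → E), (∀ i, v i ∈ D x) → ω x v = 0

/-- The subgroup `Ω^p(Q, F)` of forms vanishing on tuples tangent to the distribution. -/
def vanishSub (D : E → Submodule ℝ E) (p : ℕ) : AddSubgroup (DForm E p) where
  carrier := {ω | TangVanish D ω}
  add_mem' := by
    intro a b ha hb x v hv
    have := ha x v hv; have := hb x v hv
    simp_all [Pi.add_apply]
  zero_mem' := by intro x v hv; rfl
  neg_mem' := by
    intro a ha x v hv
    have := ha x v hv
    simp_all [Pi.neg_apply]

/-- Tangential coboundaries in degree `p`: the subgroup generated by forms vanishing along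
the foliation together with exterior derivatives of smooth forms. -/
def Bsub (D : E → Submodule ℝ E) (p : ℕ) : AddSubgroup (DForm E p) :=
  AddSubgroup.closure
    ({ω | TangVanish D ω} ∪
      {ω | ∃ (q : ℕ) (h : q + 1 = p) (α : DForm E q), SmoothForm α ∧
        ω = fun x v => extD α x fun i => v (Fin.cast h i)})

/-- Tangential cocycles in degree `p`: generated by smooth forms whose exterior derivative
vanishes along the foliation. -/
def Zsub (D : E → Submodule ℝ E) (p : ℕ) : AddSubgroup (DForm E p) :=
  AddSubgroup.closure {ω | SmoothForm ω ∧ TangVanish D (extD ω)}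

/-- De Rham cohomology tangent to the foliation with tangent distribution `D`. -/
abbrev Hdd (D : E → Submodule ℝ E) (p : ℕ) :=
  Zsub D p ⧸ (Bsub D p).addSubgroupOf (Zsub D p)

/-- A foliation on `E`, given by its tangent distribution, which is involutive and admits
smooth sections through every tangent vector. -/
structure Foliation (E : Type*) [NormedAddCommGroup E] [NormedSpace ℝ E] where
  dir : E → Submodule ℝ E
  sections : ∀ x, ∀ v ∈ dir x, ∃ X : E → E,
    ContDiff ℝ (⊤ : ℕ∞) X ∧ (∀ y, X y ∈ dir y) ∧ X x = v
  involutive : ∀ X Y : E → E, ContDiff ℝ (⊤ : ℕ∞) X → ContDiff ℝ (⊤ : ℕ∞) Y →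
    (∀ y, X y ∈ dir y) → (∀ y, Y y ∈ dir y) →
    ∀ x, fderiv ℝ Y x (X x) - fderiv ℝ X x (Y x) ∈ dir x

/- low degree unpackaged forms -/

/-- Pointwise linear 1-form. -/
def IsLin1 (α : E → E → ℝ) : Prop := ∀ x, ∃ l : E →ₗ[ℝ] ℝ, ⇑l = α x

/-- Pointwise bilinear and antisymmetric 2-form. -/
def IsBilinAlt (Ω : E → E → E → ℝ) : Prop :=
  (∀ x, ∃ B : E →ₗ[ℝ] E →ₗ[ℝ] ℝ, ∀ u v, B u v = Ω x u v) ∧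
    ∀ x u v, Ω x u v = -Ω x v u

def Smooth1 (α : E → E → ℝ) : Prop := ∀ v, ContDiff ℝ (⊤ : ℕ∞) fun x => α x v

def Smooth2 (Ω : E → E → E → ℝ) : Prop := ∀ u v, ContDiff ℝ (⊤ : ℕ∞) fun x => Ω x u v

/-- Exterior derivative of a 1-form. -/
def d1 (α : E → E → ℝ) : E → E → E → ℝ := fun x u v =>
  fderiv ℝ (fun y => α y v) x u - fderiv ℝ (fun y => α y u) x v

/-- Exterior derivative of a 2-form. -/
def d2 (Ω : E → E → E → ℝ) : E → E → E → E → ℝ := fun x u v w =>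
  fderiv ℝ (fun y => Ω y v w) x u - fderiv ℝ (fun y => Ω y u w) x v +
    fderiv ℝ (fun y => Ω y u v) x w

def Closed1 (α : E → E → ℝ) : Prop := ∀ x u v, d1 α x u v = 0

/-- Nondegeneracy of a 2-form. -/
def Nondeg2 (Ω : E → E → E → ℝ) : Prop := ∀ x v, v ≠ 0 → ∃ w, Ω x v w ≠ 0

/-- `(ω ∧ Ω) (u, v, w)` for a 1-form `ω` and a 2-form `Ω`. -/
def wedge12 (ω : E → E → ℝ) (Ω : E → E → E → ℝ) : E → E → E → E → ℝ :=
  fun x u v w => ω x u * Ω x v w - ω x v * Ω x u w + ω x w * Ω x u v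

/-- `(M, Ω, ω)` is a locally conformal symplectic manifold (modeled on the normed space `E`). -/
def IsLCS (Ω : E → E → E → ℝ) (ω : E → E → ℝ) : Prop :=
  Smooth2 Ω ∧ IsBilinAlt Ω ∧ Nondeg2 Ω ∧
    Smooth1 ω ∧ IsLin1 ω ∧ Closed1 ω ∧
    ∀ x u v w, d2 Ω x u v w = wedge12 ω Ω x u v w

/-- Pullback of a 1-form. -/
def pb1 (j : F' → E) (α : E → E → ℝ) : F' → F' → ℝ := fun q u =>
  α (j q) (fderiv ℝ j q u)

/-- Pullback of a 2-form. -/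
def pb2 (j : F' → E) (Ω : E → E → E → ℝ) : F' → F' → F' → ℝ := fun q u v =>
  Ω (j q) (fderiv ℝ j q u) (fderiv ℝ j q v)

/-- Lie bracket of vector fields. -/
def lieB (X Y : E → E) : E → E := fun x => fderiv ℝ Y x (X x) - fderiv ℝ X x (Y x)

end
section AuxInvol
variable {E : Type*} [NormedAddCommGroup E] [NormedSpace ℝ E]
variable {Q' : Type*} [NormedAddCommGroup Q'] [NormedSpace ℝ Q']

lemma aux_fderiv_B_apply (B : E → (E →L[ℝ] E →L[ℝ] ℝ)) (hB : Differentiable ℝ B)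
    (x z v w : E) :
    fderiv ℝ (fun y => B y v w) x z = (fderiv ℝ B x z) v w := by
  have h1 : DifferentiableAt ℝ (fun y => B y v) x := (hB x).clm_apply (differentiableAt_const v)
  have e1 : fderiv ℝ (fun y => B y v) x = (fderiv ℝ B x).flip v := by
    rw [fderiv_clm_apply (hB x) (differentiableAt_const v)]
    ext z'; simp
  have e2 : fderiv ℝ (fun y => B y v w) x = (fderiv ℝ (fun y => B y v) x).flip w := by
    rw [fderiv_clm_apply h1 (differentiableAt_const w)]
    ext z'; simp
  rw [e2, e1]; simp

lemma aux_fderiv_clm_field (J : Q' → (Q' →L[ℝ] E)) (q : Q') (hJ : DifferentiableAt ℝ J q)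
    (V : Q' → Q') (hV : DifferentiableAt ℝ V q) (u : Q') :
    fderiv ℝ (fun p => J p (V p)) q u = fderiv ℝ J q u (V q) + J q (fderiv ℝ V q u) := by
  rw [fderiv_clm_apply hJ hV]; simp [add_comm]

lemma aux_fderiv_triple (B : E → (E →L[ℝ] E →L[ℝ] ℝ)) (hB : ContDiff ℝ (⊤ : ℕ∞) B)
    (ι : Q' → E) (hι : ContDiff ℝ (⊤ : ℕ∞) ι)
    (a b : Q' → E) (ha : Differentiable ℝ a) (hb : Differentiable ℝ b) (q u : Q') :
    fderiv ℝ (fun p => B (ι p) (a p) (b p)) q u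
      = fderiv ℝ (fun x => B x (a q) (b q)) (ι q) (fderiv ℝ ι q u)
        + B (ι q) (fderiv ℝ a q u) (b q) + B (ι q) (a q) (fderiv ℝ b q u) := by
  have hBd : Differentiable ℝ B := hB.differentiable (by simp)
  have hιd : Differentiable ℝ ι := hι.differentiable (by simp)
  have hBι : Differentiable ℝ (fun p => B (ι p)) := fun p => DifferentiableAt.comp (g := B) p (hBd (ι p)) (hιd p)
  have hc : Differentiable ℝ (fun p => B (ι p) (a p)) := hBι.clm_apply ha
  have h1 : fderiv ℝ (fun p => B (ι p) (a p) (b p)) q u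
      = B (ι q) (a q) (fderiv ℝ b q u) + (fderiv ℝ (fun p => B (ι p) (a p)) q u) (b q) := by
    rw [fderiv_clm_apply (hc q) (hb q)]; simp
  have h2 : fderiv ℝ (fun p => B (ι p) (a p)) q u
      = B (ι q) (fderiv ℝ a q u) + (fderiv ℝ (fun p => B (ι p)) q u) (a q) := by
    rw [fderiv_clm_apply (hBι q) (ha q)]; simp
  have h3 : fderiv ℝ (fun p => B (ι p)) q = (fderiv ℝ B (ι q)).comp (fderiv ℝ ι q) :=
    fderiv_comp (g := B) q (hBd (ι q)) (hιd q)
  have h4 : fderiv ℝ (fun x => B x (a q) (b q)) (ι q) (fderiv ℝ ι q u)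
      = (fderiv ℝ B (ι q) (fderiv ℝ ι q u)) (a q) (b q) :=
    aux_fderiv_B_apply B hBd _ _ _ _
  rw [h1, h2, h3, h4]
  simp [ContinuousLinearMap.add_apply]
  ring

lemma aux_Brep [FiniteDimensional ℝ E]
    (Ω : E → E → E → ℝ) (hS : ∀ u v, ContDiff ℝ (⊤ : ℕ∞) fun x => Ω x u v)
    (hb : ∀ x, ∃ B : E →ₗ[ℝ] E →ₗ[ℝ] ℝ, ∀ u v, B u v = Ω x u v) :
    ∃ B : E → (E →L[ℝ] E →L[ℝ] ℝ), ContDiff ℝ (⊤ : ℕ∞) B ∧ ∀ x u v, B x u v = Ω x u v := by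
  classical
  let b := Module.Basis.ofVectorSpace ℝ E
  let c : _ → E →L[ℝ] ℝ := fun i => LinearMap.toContinuousLinearMap (b.coord i)
  refine ⟨fun x => ∑ i, ∑ j, Ω x (b i) (b j) • (c i).smulRight (c j), ?_, ?_⟩
  · letI : IsBoundedSMul ℝ (E →L[ℝ] E →L[ℝ] ℝ) := @NormedSpace.toIsBoundedSMul ℝ (E →L[ℝ] E →L[ℝ] ℝ) _ _ _
    exact ContDiff.sum fun i _ => ContDiff.sum fun j _ => (hS _ _).smul contDiff_const
  · intro x u v
    obtain ⟨B₀, hB₀⟩ := hb x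
    have key : Ω x u v = ∑ i, ∑ j, b.repr u i * b.repr v j * Ω x (b i) (b j) := by
      conv_lhs => rw [← hB₀, ← b.sum_repr u, ← b.sum_repr v]
      simp only [map_sum, map_smul, LinearMap.sum_apply, LinearMap.smul_apply, smul_eq_mul, hB₀]
      rw [Finset.sum_comm]
      refine Finset.sum_congr rfl fun i _ => ?_
      rw [Finset.mul_sum]
      exact Finset.sum_congr rfl fun j _ => by ring
    rw [key]
    simp only [ContinuousLinearMap.coe_sum', Finset.sum_apply, ContinuousLinearMap.coe_smul',
      Pi.smul_apply, ContinuousLinearMap.smulRight_apply, smul_eq_mul]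
    refine Finset.sum_congr rfl fun i _ => Finset.sum_congr rfl fun j _ => ?_
    have hc : ∀ (i) (w : E), c i w = b.repr w i := fun i w => by
      simp [c, Module.Basis.coord_apply]
    rw [hc, hc]
    ring

end AuxInvol

/-- the characteristic distribution `(TQ)^Ω ∩ TQ` of a submanifold `Q`
(modeled by an embedding `ι : Q' → E`) of a locally conformal symplectic manifold is
involutive. -/

theorem characteristic_distribution_involutive
    {E : Type*} [NormedAddCommGroup E] [NormedSpace ℝ E] [FiniteDimensional ℝ E]
    {n : ℕ} (hdim : Module.finrank ℝ E = 2 * n) (hn : 1 < n)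
    (Ω : E → E → E → ℝ) (ω : E → E → ℝ) (hlcs : IsLCS Ω ω)
    {Q' : Type*} [NormedAddCommGroup Q'] [NormedSpace ℝ Q'] [FiniteDimensional ℝ Q']
    (ι : Q' → E) (hι : ContDiff ℝ (⊤ : ℕ∞) ι) (hιinj : Function.Injective ι)
    (hιemb : Topology.IsEmbedding ι)
    (hιimm : ∀ q, Function.Injective (fderiv ℝ ι q))
    -- the characteristic distribution, in the coordinates of `Q'` it is
    -- `ker ι*Ω = (TQ)^Ω ∩ TQ`:
    (D : Q' → Submodule ℝ Q')
    (hD : ∀ q u, u ∈ D q ↔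
      ∀ w : Q', Ω (ι q) (fderiv ℝ ι q u) (fderiv ℝ ι q w) = 0)
    -- the dimension of the characteristic distribution is constant:
    {k : ℕ} (hconst : ∀ q, Module.finrank ℝ (D q) = k) :
    -- involutivity: the bracket of sections of `D` is a section of `D`:
    ∀ X Y : Q' → Q', ContDiff ℝ (⊤ : ℕ∞) X → ContDiff ℝ (⊤ : ℕ∞) Y →
      (∀ q, X q ∈ D q) → (∀ q, Y q ∈ D q) →
      ∀ q, lieB X Y q ∈ D q := by
  intro X Y hX hY hXD hYD q
  obtain ⟨hS2, hBA, hnd, hw1, hw2, hw3, hd2w⟩ := hlcs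
  obtain ⟨B, hBs, hBeq⟩ := aux_Brep Ω hS2 hBA.1
  have hA : ∀ x u v, Ω x u v = -Ω x v u := hBA.2
  have hJ : ContDiff ℝ (⊤ : ℕ∞) (fderiv ℝ ι) := hι.fderiv_right (le_refl _)
  have hJd : Differentiable ℝ (fderiv ℝ ι) := hJ.differentiable (by simp)
  have hXd : Differentiable ℝ X := hX.differentiable (by simp)
  have hYd : Differentiable ℝ Y := hY.differentiable (by simp)
  have haY : Differentiable ℝ (fun p => fderiv ℝ ι p (Y p)) := hJd.clm_apply hYd
  have haX : Differentiable ℝ (fun p => fderiv ℝ ι p (X p)) := hJd.clm_apply hXd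
  rw [hD]
  intro w
  have haw : Differentiable ℝ (fun p => fderiv ℝ ι p w) :=
    hJd.clm_apply (differentiable_const w)
  have hsym : ∀ u v : Q', fderiv ℝ (fderiv ℝ ι) q u v = fderiv ℝ (fderiv ℝ ι) q v u :=
    hι.contDiffAt.isSymmSndFDerivAt (by rw [minSmoothness_of_isRCLikeNormedField]; exact WithTop.coe_le_coe.mpr le_top)
  have hX0 : ∀ p v, Ω (ι p) (fderiv ℝ ι p (X p)) (fderiv ℝ ι p v) = 0 :=
    fun p v => (hD p (X p)).1 (hXD p) v
  have hY0 : ∀ p v, Ω (ι p) (fderiv ℝ ι p (Y p)) (fderiv ℝ ι p v) = 0 :=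
    fun p v => (hD p (Y p)).1 (hYD p) v
  -- the three derivative identities of identically vanishing functions
  have E1 := aux_fderiv_triple B hBs ι hι _ _ haY haw q (X q)
  have E2 := aux_fderiv_triple B hBs ι hι _ _ haX haw q (Y q)
  have E3 := aux_fderiv_triple B hBs ι hι _ _ haX haY q w
  have z1 : (fun p => B (ι p) (fderiv ℝ ι p (Y p)) (fderiv ℝ ι p w)) = fun _ => (0:ℝ) :=
    funext fun p => by rw [hBeq]; exact hY0 p w
  have z2 : (fun p => B (ι p) (fderiv ℝ ι p (X p)) (fderiv ℝ ι p w)) = fun _ => (0:ℝ) :=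
    funext fun p => by rw [hBeq]; exact hX0 p w
  have z3 : (fun p => B (ι p) (fderiv ℝ ι p (X p)) (fderiv ℝ ι p (Y p))) = fun _ => (0:ℝ) :=
    funext fun p => by rw [hBeq]; exact hX0 p (Y p)
  rw [z1] at E1
  rw [z2] at E2
  rw [z3] at E3
  simp only [fderiv_fun_const, Pi.zero_apply, ContinuousLinearMap.zero_apply] at E1 E2 E3
  -- expand the derivatives of the vector fields along ι
  have eY : ∀ u, fderiv ℝ (fun p => fderiv ℝ ι p (Y p)) q u
      = fderiv ℝ (fderiv ℝ ι) q u (Y q) + fderiv ℝ ι q (fderiv ℝ Y q u) :=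
    fun u => aux_fderiv_clm_field _ q (hJd q) Y (hYd q) u
  have eX : ∀ u, fderiv ℝ (fun p => fderiv ℝ ι p (X p)) q u
      = fderiv ℝ (fderiv ℝ ι) q u (X q) + fderiv ℝ ι q (fderiv ℝ X q u) :=
    fun u => aux_fderiv_clm_field _ q (hJd q) X (hXd q) u
  have ew : ∀ u, fderiv ℝ (fun p => fderiv ℝ ι p w) q u = fderiv ℝ (fderiv ℝ ι) q u w := by
    intro u
    rw [aux_fderiv_clm_field _ q (hJd q) (fun _ => w) (differentiableAt_const w) u]
    simp
  rw [eY, ew] at E1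
  rw [eX, ew] at E2
  rw [eX, eY] at E3
  simp only [map_add, ContinuousLinearMap.add_apply] at E1 E2 E3
  -- the dΩ = ω ∧ Ω identity at the relevant vectors
  have hfun : ∀ v w' : E, (fun y => Ω y v w') = fun y => B y v w' :=
    fun v w' => funext fun y => (hBeq y v w').symm
  have hD2 : fderiv ℝ (fun x => B x (fderiv ℝ ι q (Y q)) (fderiv ℝ ι q w)) (ι q)
        (fderiv ℝ ι q (X q))
      - fderiv ℝ (fun x => B x (fderiv ℝ ι q (X q)) (fderiv ℝ ι q w)) (ι q)
        (fderiv ℝ ι q (Y q))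
      + fderiv ℝ (fun x => B x (fderiv ℝ ι q (X q)) (fderiv ℝ ι q (Y q))) (ι q)
        (fderiv ℝ ι q w) = 0 := by
    simp only [← hfun]
    have := hd2w (ι q) (fderiv ℝ ι q (X q)) (fderiv ℝ ι q (Y q)) (fderiv ℝ ι q w)
    simp only [d2, wedge12, hX0 q w, hY0 q w, hX0 q (Y q), mul_zero, zero_mul, sub_zero,
      add_zero, zero_add, zero_sub, neg_zero] at this
    linarith [this]
  -- antisymmetry and vanishing facts at q, phrased with B
  have hAB : ∀ a b : E, B (ι q) a b = -B (ι q) b a := fun a b => by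
    rw [hBeq, hBeq]; exact hA _ a b
  have hX0B : ∀ v, B (ι q) (fderiv ℝ ι q (X q)) (fderiv ℝ ι q v) = 0 := fun v => by
    rw [hBeq]; exact hX0 q v
  have hY0B : ∀ v, B (ι q) (fderiv ℝ ι q (Y q)) (fderiv ℝ ι q v) = 0 := fun v => by
    rw [hBeq]; exact hY0 q v
  have hs1 : B (ι q) (fderiv ℝ (fderiv ℝ ι) q (X q) (Y q)) (fderiv ℝ ι q w)
      = B (ι q) (fderiv ℝ (fderiv ℝ ι) q (Y q) (X q)) (fderiv ℝ ι q w) := by rw [hsym]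
  have hs2 : B (ι q) (fderiv ℝ ι q (Y q)) (fderiv ℝ (fderiv ℝ ι) q (X q) w)
      = -B (ι q) (fderiv ℝ (fderiv ℝ ι) q w (X q)) (fderiv ℝ ι q (Y q)) := by
    rw [hsym (X q) w]; exact hAB _ _
  have hs3 : B (ι q) (fderiv ℝ ι q (X q)) (fderiv ℝ (fderiv ℝ ι) q w (Y q))
      = B (ι q) (fderiv ℝ ι q (X q)) (fderiv ℝ (fderiv ℝ ι) q (Y q) w) := by rw [hsym]
  have hv1 : B (ι q) (fderiv ℝ ι q (fderiv ℝ X q w)) (fderiv ℝ ι q (Y q)) = 0 := by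
    rw [hAB, hY0B]; ring
  have hv2 : B (ι q) (fderiv ℝ ι q (X q)) (fderiv ℝ ι q (fderiv ℝ Y q w)) = 0 := hX0B _
  -- conclude
  rw [← hBeq]
  simp only [lieB, map_sub, ContinuousLinearMap.sub_apply]
  have expand : B (ι q) (fderiv ℝ ι q (fderiv ℝ Y q (X q)) - fderiv ℝ ι q (fderiv ℝ X q (Y q)))
      (fderiv ℝ ι q w)
      = B (ι q) (fderiv ℝ ι q (fderiv ℝ Y q (X q))) (fderiv ℝ ι q w)
        - B (ι q) (fderiv ℝ ι q (fderiv ℝ X q (Y q))) (fderiv ℝ ι q w) := by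
    rw [map_sub]; rfl
  linarith [E1, E2, E3, hD2, hs1, hs2, hs3, hv1, hv2, expand]
end

section
/- Let Q be a submanifold of a locally conformal symplectic manifold (M, Ω, ω) with characteristic foliation F of the constant-rank distribution TQ^Ω ∩ TQ, with N = Q/F a smooth manifold of dimension > 2 and π : Q → N a submersion. If there exists a locally conformal symplectic form τ on N with π*τ = ι*Ω, then ι*ω(X) = 0 for every smooth section X of TQ^Ω ∩ TQ. -/
section AuxHR

lemma exists_clm_rep' {E : Type*} [NormedAddCommGroup E] [NormedSpace ℝ E] [FiniteDimensional ℝ E]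
    (σ : E → E → E → ℝ) (hσ : Smooth2 σ)
    (hbil : ∀ x, ∃ B : E →ₗ[ℝ] E →ₗ[ℝ] ℝ, ∀ u v, B u v = σ x u v) :
    ∃ B : E → (E →L[ℝ] E →L[ℝ] ℝ), ContDiff ℝ (⊤ : ℕ∞) B ∧ ∀ x u v, B x u v = σ x u v := by
  classical
  set b := Module.finBasis ℝ E with hb
  set c : Fin (Module.finrank ℝ E) → Fin (Module.finrank ℝ E) → (E →L[ℝ] E →L[ℝ] ℝ) :=
    fun i j => LinearMap.toContinuousLinearMap
      ((b.coord i).smulRight (LinearMap.toContinuousLinearMap (b.coord j))) with hc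
  refine ⟨fun x => ∑ i, ∑ j, σ x (b i) (b j) • c i j, ?_, ?_⟩
  · have : IsBoundedSMul ℝ (E →L[ℝ] E →L[ℝ] ℝ) :=
      NormedSpace.toIsBoundedSMul (𝕜 := ℝ) (E := E →L[ℝ] E →L[ℝ] ℝ)
    exact ContDiff.sum fun i _ => ContDiff.sum fun j _ => (hσ (b i) (b j)).smul contDiff_const
  · intro x u v
    obtain ⟨A, hA⟩ := hbil x
    have hcv : ∀ i j, (c i j) u v = b.repr u i * b.repr v j := by
      intro i j
      simp [hc, LinearMap.smulRight_apply, Module.Basis.coord_apply, smul_eq_mul]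
    have expand : σ x u v = ∑ i, ∑ j, b.repr u i * (b.repr v j * σ x (b i) (b j)) := by
      rw [← hA]
      conv_lhs => rw [← b.sum_repr u, ← b.sum_repr v]
      rw [map_sum]
      simp only [map_smul, LinearMap.smul_apply, LinearMap.coe_sum, Finset.sum_apply,
        map_sum, smul_eq_mul, Finset.mul_sum]
      rw [Finset.sum_comm]
      exact Finset.sum_congr rfl fun i _ => Finset.sum_congr rfl fun j _ => by rw [hA]; ring
    simp only [ContinuousLinearMap.sum_apply, ContinuousLinearMap.smul_apply, hcv,
      smul_eq_mul, expand]
    exact Finset.sum_congr rfl fun i _ => Finset.sum_congr rfl fun j _ => by ring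

lemma d2_pull' {E Q' : Type*} [NormedAddCommGroup E] [NormedSpace ℝ E] [FiniteDimensional ℝ E]
    [NormedAddCommGroup Q'] [NormedSpace ℝ Q']
    (j : Q' → E) (hj : ContDiff ℝ (⊤ : ℕ∞) j) (σ : E → E → E → ℝ) (hσ : Smooth2 σ)
    (hbil : ∀ x, ∃ B : E →ₗ[ℝ] E →ₗ[ℝ] ℝ, ∀ u v, B u v = σ x u v)
    (halt : ∀ x u v, σ x u v = -σ x v u)
    (q u v w : Q') :
    d2 (pb2 j σ) q u v w =
      d2 σ (j q) (fderiv ℝ j q u) (fderiv ℝ j q v) (fderiv ℝ j q w) := by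
  obtain ⟨B, hB, hBσ⟩ := exists_clm_rep' σ hσ hbil
  set j' : Q' → Q' →L[ℝ] E := fderiv ℝ j with hj'def
  have hj' : ContDiff ℝ (⊤ : ℕ∞) j' := hj.fderiv_right (by simp)
  have hjd : Differentiable ℝ j := hj.differentiable (by simp)
  have hBd : Differentiable ℝ B := hB.differentiable (by simp)
  have hj'd : Differentiable ℝ j' := hj'.differentiable (by simp)
  have hsymm : ∀ a b : Q', fderiv ℝ j' q a b = fderiv ℝ j' q b a := by
    intro a b
    exact (hj.contDiffAt.isSymmSndFDerivAt (by rw [minSmoothness_of_isRCLikeNormedField]; exact WithTop.coe_le_coe.mpr le_top)) a b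
  have hjev : ∀ a : Q', fderiv ℝ (fun y => j' y a) q = (fderiv ℝ j' q).flip a := by
    intro a
    rw [fderiv_clm_apply (hj'd q) (differentiableAt_const a)]
    simp
  have hBalt : ∀ x a b, B x a b = -B x b a := fun x a b => by rw [hBσ, hBσ, halt]
  have hσd : ∀ (x : E) (a b c : E), fderiv ℝ (fun y => σ y b c) x a = fderiv ℝ B x a b c := by
    intro x a b c
    have h1 : (fun y => σ y b c) = fun y => B y b c := funext fun y => (hBσ y b c).symm
    have inner : fderiv ℝ (fun y => B y b) x = (fderiv ℝ B x).flip b := by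
      rw [fderiv_clm_apply (hBd x) (differentiableAt_const b)]
      simp
    rw [h1]
    rw [show (fun y => B y b c) = (fun y => (fun z => B z b) y c) from rfl,
      fderiv_clm_apply ((hBd.clm_apply (differentiable_const b)) x) (differentiableAt_const c)]
    simp [inner]
  have key : ∀ a b c : Q', fderiv ℝ (fun y => pb2 j σ y a b) q c =
      fderiv ℝ B (j q) (j' q c) (j' q a) (j' q b)
      + B (j q) (fderiv ℝ j' q c a) (j' q b)
      + B (j q) (j' q a) (fderiv ℝ j' q c b) := by
    intro a b c
    have hre : (fun y => pb2 j σ y a b) = fun y => (B (j y)) (j' y a) (j' y b) := by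
      funext y; exact (hBσ (j y) _ _).symm
    have d1 : DifferentiableAt ℝ (fun y => B (j y)) q := (Differentiable.comp (G := E →L[ℝ] E →L[ℝ] ℝ) (g := B) hBd hjd) q
    have d2a : DifferentiableAt ℝ (fun y => j' y a) q := (hj'd.clm_apply (differentiable_const a)) q
    have d2b : DifferentiableAt ℝ (fun y => j' y b) q := (hj'd.clm_apply (differentiable_const b)) q
    have dc : DifferentiableAt ℝ (fun y => B (j y) (j' y a)) q := d1.clm_apply d2a
    have hcomp : fderiv ℝ (fun y => B (j y)) q = (fderiv ℝ B (j q)).comp (j' q) :=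
      fderiv_comp (G := E →L[ℝ] E →L[ℝ] ℝ) (g := B) q (hBd (j q)) (hjd q)
    rw [hre, fderiv_clm_apply dc d2b]
    simp only [ContinuousLinearMap.add_apply, ContinuousLinearMap.coe_comp',
      Function.comp_apply, ContinuousLinearMap.flip_apply]
    rw [hjev b, fderiv_clm_apply d1 d2a, hcomp, hjev a]
    simp only [ContinuousLinearMap.add_apply, ContinuousLinearMap.coe_comp',
      Function.comp_apply, ContinuousLinearMap.flip_apply]
    ring
  show d2 (pb2 j σ) q u v w = _
  simp only [d2]
  rw [key v w u, key u w v, key u v w, hσd, hσd, hσd]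
  rw [hsymm v u, hsymm w v, hBalt (j q) (fderiv ℝ j' q w u) (j' q v), hsymm w u]
  ring

end AuxHR

/-- necessity in the Haller–Rybicki reduction: if a locally conformal
symplectic form `τ` on `N = Q/F` satisfies `π*τ = ι*Ω`, then `ι*ω` annihilates every
smooth section of the characteristic distribution. -/
theorem lcs_form_reduction_necessary
    {E : Type*} [NormedAddCommGroup E] [NormedSpace ℝ E] [FiniteDimensional ℝ E]
    {n : ℕ} (hdim : Module.finrank ℝ E = 2 * n) (hn : 1 < n)
    (Ω : E → E → E → ℝ) (ω : E → E → ℝ) (hlcs : IsLCS Ω ω)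
    {Q' : Type*} [NormedAddCommGroup Q'] [NormedSpace ℝ Q'] [FiniteDimensional ℝ Q']
    (ι : Q' → E) (hι : ContDiff ℝ (⊤ : ℕ∞) ι) (hιinj : Function.Injective ι)
    (hιemb : Topology.IsEmbedding ι)
    (hιimm : ∀ q, Function.Injective (fderiv ℝ ι q))
    -- the characteristic distribution `D = TQ^Ω ∩ TQ = ker ι*Ω` (in `Q'`-coordinates):
    (D : Q' → Submodule ℝ Q')
    (hD : ∀ q u, u ∈ D q ↔
      ∀ w : Q', Ω (ι q) (fderiv ℝ ι q u) (fderiv ℝ ι q w) = 0)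
    {k : ℕ} (hconst : ∀ q, Module.finrank ℝ (D q) = k)
    -- `N = Q/F`, a smooth manifold of dimension `> 2`, with the canonical projection
    -- `π : Q → N`, a submersion whose connected fibers are the leaves of `F`,
    -- `ker π_* = TQ^Ω ∩ TQ`:
    {N : Type*} [NormedAddCommGroup N] [NormedSpace ℝ N] [FiniteDimensional ℝ N]
    (hN : 2 < Module.finrank ℝ N)
    (π : Q' → N) (hπ : ContDiff ℝ (⊤ : ℕ∞) π) (hπsurj : Function.Surjective π)
    (hπsub : ∀ q, Function.Surjective (fderiv ℝ π q))
    (hker : ∀ q, LinearMap.ker ((fderiv ℝ π q : Q' →L[ℝ] N) : Q' →ₗ[ℝ] N) = D q)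
    (hfib : ∀ y : N, IsConnected (π ⁻¹' {y}))
    (τ : N → N → N → ℝ) (ατ : N → N → ℝ) (hτ : IsLCS τ ατ)
    (hπτ : ∀ q u v, τ (π q) (fderiv ℝ π q u) (fderiv ℝ π q v) =
      Ω (ι q) (fderiv ℝ ι q u) (fderiv ℝ ι q v)) :
    ∀ X : Q' → Q', ContDiff ℝ (⊤ : ℕ∞) X → (∀ q, X q ∈ D q) →
      ∀ q, ω (ι q) (fderiv ℝ ι q (X q)) = 0  := by
  intro X hX hXD q
  obtain ⟨hΩs, hΩbil, hΩnd, hωs, hωlin, hωcl, hΩd⟩ := hlcs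
  obtain ⟨hτs, hτbil, hτnd, hατs, hατlin, hατcl, hτd⟩ := hτ
  have hpb : pb2 π τ = pb2 ι Ω := by
    funext y a b; exact hπτ y a b
  have hπX : fderiv ℝ π q (X q) = 0 := by
    have h1 : X q ∈ LinearMap.ker ((fderiv ℝ π q : Q' →L[ℝ] N) : Q' →ₗ[ℝ] N) :=
      (hker q).symm ▸ hXD q
    simpa using h1
  have hτz : ∀ b, τ (π q) 0 b = 0 := by
    obtain ⟨Bt, hBt⟩ := hτbil.1 (π q)
    intro b; rw [← hBt]; simp
  have hατz : ατ (π q) 0 = 0 := by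
    obtain ⟨l, hl⟩ := hατlin (π q)
    rw [← hl]; simp
  have hΩX : ∀ w' : Q', Ω (ι q) (fderiv ℝ ι q (X q)) (fderiv ℝ ι q w') = 0 :=
    (hD q (X q)).1 (hXD q)
  have keymul : ∀ u v : Q',
      ω (ι q) (fderiv ℝ ι q (X q)) * Ω (ι q) (fderiv ℝ ι q u) (fderiv ℝ ι q v) = 0 := by
    intro u v
    have h1 : d2 (pb2 π τ) q (X q) u v =
        d2 τ (π q) (fderiv ℝ π q (X q)) (fderiv ℝ π q u) (fderiv ℝ π q v) :=
      d2_pull' π hπ τ hτs hτbil.1 hτbil.2 q (X q) u v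
    have h2 : d2 (pb2 ι Ω) q (X q) u v =
        d2 Ω (ι q) (fderiv ℝ ι q (X q)) (fderiv ℝ ι q u) (fderiv ℝ ι q v) :=
      d2_pull' ι hι Ω hΩs hΩbil.1 hΩbil.2 q (X q) u v
    have hLHS : d2 (pb2 π τ) q (X q) u v = 0 := by
      rw [h1, hπX, hτd]
      have hτz' : ∀ b, τ (π q) b 0 = 0 := fun b => by
        rw [hτbil.2, hτz]; ring
      simp [wedge12, hατz, hτz, hτz']
    have hRHS : d2 (pb2 ι Ω) q (X q) u v =
        ω (ι q) (fderiv ℝ ι q (X q)) * Ω (ι q) (fderiv ℝ ι q u) (fderiv ℝ ι q v) := by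
      rw [h2, hΩd]
      have hΩX2 : ∀ w' : Q', Ω (ι q) (fderiv ℝ ι q w') (fderiv ℝ ι q (X q)) = 0 := fun w' => by
        rw [hΩbil.2, hΩX]; ring
      simp [wedge12, hΩX, hΩX2]
    rw [← hRHS, ← hpb, hLHS]
  have : Nontrivial N := Module.nontrivial_of_finrank_pos (R := ℝ) (by omega)
  obtain ⟨a, ha⟩ := exists_ne (0 : N)
  obtain ⟨b, hb⟩ := hτnd (π q) a ha
  obtain ⟨u, hu⟩ := hπsub q a
  obtain ⟨v, hv⟩ := hπsub q b
  have hne : Ω (ι q) (fderiv ℝ ι q u) (fderiv ℝ ι q v) ≠ 0 := by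
    rw [← hπτ q u v, hu, hv]; exact hb
  exact (mul_eq_zero.mp (keymul u v)).resolve_right hne
end

section
/- Let Q be a submanifold of a locally conformal symplectic manifold (M, Ω, ω) with characteristic foliation F of TQ^Ω ∩ TQ of constant rank, N = Q/F a smooth manifold of dimension > 2, and π : Q → N a submersion. If ι*ω(X) = 0 for every smooth section X of TQ^Ω ∩ TQ, then there exists a locally conformal symplectic form τ on N (with Lee form α satisfying π*α = ι*ω) such that π*τ = ι*Ω. -/
noncomputable section HRAux
set_option linter.unusedSectionVars false
set_option maxHeartbeats 1000000

open scoped Topology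

section Master

variable {X E : Type*} [NormedAddCommGroup X] [NormedSpace ℝ X]
  [NormedAddCommGroup E] [NormedSpace ℝ E] [FiniteDimensional ℝ E]

private lemma hr_rep2 {m : ℕ} (b : Module.Basis (Fin m) ℝ E)
    (B : E →ₗ[ℝ] E →ₗ[ℝ] ℝ) (a c : E) :
    B a c = ∑ i, ∑ j, b.repr a i * b.repr c j * B (b i) (b j) := by
  conv_lhs => rw [← b.sum_repr a, ← b.sum_repr c]
  simp only [map_sum, map_smul, LinearMap.sum_apply, LinearMap.smul_apply, smul_eq_mul,
    Finset.smul_sum, Finset.mul_sum]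
  rw [Finset.sum_comm]
  refine Finset.sum_congr rfl fun i _ => Finset.sum_congr rfl fun j _ => by ring

private lemma hr_rep1 {m : ℕ} (b : Module.Basis (Fin m) ℝ E)
    (l : E →ₗ[ℝ] ℝ) (a : E) :
    l a = ∑ i, b.repr a i * l (b i) := by
  conv_lhs => rw [← b.sum_repr a]
  rw [map_sum]
  refine Finset.sum_congr rfl fun i _ => ?_
  rw [map_smul]; simp [smul_eq_mul]

private lemma hr_key2 (Ω : E → E → E → ℝ)
    (hbil : ∀ x, ∃ B : E →ₗ[ℝ] E →ₗ[ℝ] ℝ, ∀ u v, B u v = Ω x u v)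
    (z a d : E) :
    Ω z a d = ∑ i, ∑ j, (Module.finBasis ℝ E).repr a i * (Module.finBasis ℝ E).repr d j *
      Ω z (Module.finBasis ℝ E i) (Module.finBasis ℝ E j) := by
  obtain ⟨B, hB⟩ := hbil z
  calc Ω z a d = B a d := (hB a d).symm
  _ = ∑ i, ∑ j, (Module.finBasis ℝ E).repr a i * (Module.finBasis ℝ E).repr d j *
      B (Module.finBasis ℝ E i) (Module.finBasis ℝ E j) := hr_rep2 _ B a d
  _ = _ := by
      refine Finset.sum_congr rfl fun i _ => Finset.sum_congr rfl fun j _ => ?_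
      rw [hB]

private lemma hr_key1 (ω : E → E → ℝ)
    (hlin : ∀ x, ∃ l : E →ₗ[ℝ] ℝ, ⇑l = ω x) (z a : E) :
    ω z a = ∑ i, (Module.finBasis ℝ E).repr a i * ω z (Module.finBasis ℝ E i) := by
  obtain ⟨l, hl⟩ := hlin z
  calc ω z a = l a := by rw [hl]
  _ = ∑ i, (Module.finBasis ℝ E).repr a i * l (Module.finBasis ℝ E i) := hr_rep1 _ l a
  _ = _ := by
      refine Finset.sum_congr rfl fun i _ => ?_
      rw [hl]


private lemma hr_master2_fderiv (Ω : E → E → E → ℝ)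
    (hsm : ∀ u v, ContDiff ℝ (⊤ : ℕ∞) fun x => Ω x u v)
    (hbil : ∀ x, ∃ B : E →ₗ[ℝ] E →ₗ[ℝ] ℝ, ∀ u v, B u v = Ω x u v)
    {f g h : X → E} {x : X} (hf : DifferentiableAt ℝ f x) (hg : DifferentiableAt ℝ g x)
    (hh : DifferentiableAt ℝ h x) (w : X) :
    fderiv ℝ (fun y => Ω (f y) (g y) (h y)) x w =
      fderiv ℝ (fun z => Ω z (g x) (h x)) (f x) (fderiv ℝ f x w)
        + Ω (f x) (fderiv ℝ g x w) (h x) + Ω (f x) (g x) (fderiv ℝ h x w) := by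
  classical
  set b : Module.Basis (Fin (Module.finrank ℝ E)) ℝ E := Module.finBasis ℝ E with hb
  set c : Fin (Module.finrank ℝ E) → E →L[ℝ] ℝ :=
    fun i => LinearMap.toContinuousLinearMap (b.coord i) with hcdef
  have hca : ∀ i (e : E), c i e = b.repr e i := fun i e => rfl
  set ρ : Fin (Module.finrank ℝ E) → Fin (Module.finrank ℝ E) → E → ℝ :=
    fun i j z => Ω z (b i) (b j) with hρ
  have hρd : ∀ i j, Differentiable ℝ (ρ i j) := fun i j => (hsm (b i) (b j)).differentiable (by simp)
  have key : ∀ (z a d : E), Ω z a d = ∑ i, ∑ j, c i a * c j d * ρ i j z := by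
    intro z a d
    simpa [hca] using hr_key2 Ω hbil z a d
  have Hg : ∀ i, HasFDerivAt (fun y => c i (g y)) ((c i).comp (fderiv ℝ g x)) x :=
    fun i => (c i).hasFDerivAt.comp x hg.hasFDerivAt
  have Hh : ∀ j, HasFDerivAt (fun y => c j (h y)) ((c j).comp (fderiv ℝ h x)) x :=
    fun j => (c j).hasFDerivAt.comp x hh.hasFDerivAt
  have Hρ : ∀ i j, HasFDerivAt (fun y => ρ i j (f y))
      ((fderiv ℝ (ρ i j) (f x)).comp (fderiv ℝ f x)) x :=
    fun i j => ((hρd i j) (f x)).hasFDerivAt.comp x hf.hasFDerivAt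
  have Hterm : ∀ i j, HasFDerivAt (fun y => c i (g y) * c j (h y) * ρ i j (f y))
      ((c i (g x) * c j (h x)) • ((fderiv ℝ (ρ i j) (f x)).comp (fderiv ℝ f x))
        + ρ i j (f x) • (c i (g x) • ((c j).comp (fderiv ℝ h x))
            + c j (h x) • ((c i).comp (fderiv ℝ g x)))) x :=
    fun i j => ((Hg i).mul (Hh j)).mul (Hρ i j)
  have Hsum : HasFDerivAt (fun y => ∑ i, ∑ j, c i (g y) * c j (h y) * ρ i j (f y))
      (∑ i, ∑ j, ((c i (g x) * c j (h x)) • ((fderiv ℝ (ρ i j) (f x)).comp (fderiv ℝ f x))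
        + ρ i j (f x) • (c i (g x) • ((c j).comp (fderiv ℝ h x))
            + c j (h x) • ((c i).comp (fderiv ℝ g x))))) x := by
    refine HasFDerivAt.fun_sum fun i _ => HasFDerivAt.fun_sum fun j _ => Hterm i j
  have hfun : (fun y => Ω (f y) (g y) (h y))
      = fun y => ∑ i, ∑ j, c i (g y) * c j (h y) * ρ i j (f y) :=
    funext fun y => key (f y) (g y) (h y)
  have hL : fderiv ℝ (fun y => Ω (f y) (g y) (h y)) x w
      = ∑ i, ∑ j, ((c i (g x) * c j (h x)) * ((fderiv ℝ (ρ i j) (f x)) (fderiv ℝ f x w))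
        + ρ i j (f x) * (c i (g x) * (c j (fderiv ℝ h x w))
            + c j (h x) * (c i (fderiv ℝ g x w)))) := by
    rw [hfun, Hsum.fderiv]
    simp only [ContinuousLinearMap.sum_apply, ContinuousLinearMap.add_apply,
      ContinuousLinearMap.smul_apply, ContinuousLinearMap.comp_apply, smul_eq_mul]
  have hfun1 : (fun z => Ω z (g x) (h x))
      = fun z => ∑ i, ∑ j, (c i (g x) * c j (h x)) * ρ i j z :=
    funext fun z => key z (g x) (h x)
  have H1 : HasFDerivAt (fun z => Ω z (g x) (h x))
      (∑ i, ∑ j, (c i (g x) * c j (h x)) • fderiv ℝ (ρ i j) (f x)) (f x) := by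
    rw [hfun1]
    exact HasFDerivAt.fun_sum fun i _ => HasFDerivAt.fun_sum fun j _ =>
      (((hρd i j) (f x)).hasFDerivAt).const_mul _
  have hR1 : fderiv ℝ (fun z => Ω z (g x) (h x)) (f x) (fderiv ℝ f x w)
      = ∑ i, ∑ j, (c i (g x) * c j (h x)) * (fderiv ℝ (ρ i j) (f x) (fderiv ℝ f x w)) := by
    rw [H1.fderiv]
    simp [ContinuousLinearMap.sum_apply, ContinuousLinearMap.smul_apply, smul_eq_mul]
  rw [hL, hR1, key (f x) (fderiv ℝ g x w) (h x), key (f x) (g x) (fderiv ℝ h x w)]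
  rw [← Finset.sum_add_distrib, ← Finset.sum_add_distrib]
  refine Finset.sum_congr rfl fun i _ => ?_
  rw [← Finset.sum_add_distrib, ← Finset.sum_add_distrib]
  refine Finset.sum_congr rfl fun j _ => by ring

private lemma hr_master1_fderiv (ω : E → E → ℝ)
    (hsm : ∀ u, ContDiff ℝ (⊤ : ℕ∞) fun x => ω x u)
    (hlin : ∀ x, ∃ l : E →ₗ[ℝ] ℝ, ⇑l = ω x)
    {f g : X → E} {x : X} (hf : DifferentiableAt ℝ f x) (hg : DifferentiableAt ℝ g x)
    (w : X) :
    fderiv ℝ (fun y => ω (f y) (g y)) x w =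
      fderiv ℝ (fun z => ω z (g x)) (f x) (fderiv ℝ f x w)
        + ω (f x) (fderiv ℝ g x w) := by
  classical
  set b : Module.Basis (Fin (Module.finrank ℝ E)) ℝ E := Module.finBasis ℝ E with hb
  set c : Fin (Module.finrank ℝ E) → E →L[ℝ] ℝ :=
    fun i => LinearMap.toContinuousLinearMap (b.coord i) with hcdef
  have hca : ∀ i (e : E), c i e = b.repr e i := fun i e => rfl
  set ρ : Fin (Module.finrank ℝ E) → E → ℝ := fun i z => ω z (b i) with hρ
  have hρd : ∀ i, Differentiable ℝ (ρ i) := fun i => (hsm (b i)).differentiable (by simp)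
  have key : ∀ (z a : E), ω z a = ∑ i, c i a * ρ i z := by
    intro z a
    simpa [hca] using hr_key1 ω hlin z a
  have Hg : ∀ i, HasFDerivAt (fun y => c i (g y)) ((c i).comp (fderiv ℝ g x)) x :=
    fun i => (c i).hasFDerivAt.comp x hg.hasFDerivAt
  have Hρ : ∀ i, HasFDerivAt (fun y => ρ i (f y))
      ((fderiv ℝ (ρ i) (f x)).comp (fderiv ℝ f x)) x :=
    fun i => ((hρd i) (f x)).hasFDerivAt.comp x hf.hasFDerivAt
  have Hsum : HasFDerivAt (fun y => ∑ i, c i (g y) * ρ i (f y))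
      (∑ i, (c i (g x) • ((fderiv ℝ (ρ i) (f x)).comp (fderiv ℝ f x))
        + ρ i (f x) • ((c i).comp (fderiv ℝ g x)))) x :=
    HasFDerivAt.fun_sum fun i _ => (Hg i).mul (Hρ i)
  have hfun : (fun y => ω (f y) (g y)) = fun y => ∑ i, c i (g y) * ρ i (f y) :=
    funext fun y => key (f y) (g y)
  have hL : fderiv ℝ (fun y => ω (f y) (g y)) x w
      = ∑ i, (c i (g x) * ((fderiv ℝ (ρ i) (f x)) (fderiv ℝ f x w))
        + ρ i (f x) * (c i (fderiv ℝ g x w))) := by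
    rw [hfun, Hsum.fderiv]
    simp only [ContinuousLinearMap.sum_apply, ContinuousLinearMap.add_apply,
      ContinuousLinearMap.smul_apply, ContinuousLinearMap.comp_apply, smul_eq_mul]
  have hfun1 : (fun z => ω z (g x)) = fun z => ∑ i, c i (g x) * ρ i z :=
    funext fun z => key z (g x)
  have H1 : HasFDerivAt (fun z => ω z (g x))
      (∑ i, c i (g x) • fderiv ℝ (ρ i) (f x)) (f x) := by
    rw [hfun1]
    exact HasFDerivAt.fun_sum fun i _ => (((hρd i) (f x)).hasFDerivAt).const_mul _
  have hR1 : fderiv ℝ (fun z => ω z (g x)) (f x) (fderiv ℝ f x w)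
      = ∑ i, c i (g x) * (fderiv ℝ (ρ i) (f x) (fderiv ℝ f x w)) := by
    rw [H1.fderiv]
    simp [ContinuousLinearMap.sum_apply, ContinuousLinearMap.smul_apply, smul_eq_mul]
  rw [hL, hR1, key (f x) (fderiv ℝ g x w)]
  rw [← Finset.sum_add_distrib]
  refine Finset.sum_congr rfl fun i _ => by ring

private lemma hr_master2_contDiff (Ω : E → E → E → ℝ)
    (hsm : ∀ u v, ContDiff ℝ (⊤ : ℕ∞) fun x => Ω x u v)
    (hbil : ∀ x, ∃ B : E →ₗ[ℝ] E →ₗ[ℝ] ℝ, ∀ u v, B u v = Ω x u v)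
    {f g h : X → E} (hf : ContDiff ℝ (⊤ : ℕ∞) f) (hg : ContDiff ℝ (⊤ : ℕ∞) g)
    (hh : ContDiff ℝ (⊤ : ℕ∞) h) :
    ContDiff ℝ (⊤ : ℕ∞) fun y => Ω (f y) (g y) (h y) := by
  classical
  set b : Module.Basis (Fin (Module.finrank ℝ E)) ℝ E := Module.finBasis ℝ E with hb
  set c : Fin (Module.finrank ℝ E) → E →L[ℝ] ℝ :=
    fun i => LinearMap.toContinuousLinearMap (b.coord i) with hcdef
  have hca : ∀ i (e : E), c i e = b.repr e i := fun i e => rfl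
  have hfun : (fun y => Ω (f y) (g y) (h y))
      = fun y => ∑ i, ∑ j, c i (g y) * c j (h y) * Ω (f y) (b i) (b j) :=
    funext fun y => by simpa [hca] using hr_key2 Ω hbil (f y) (g y) (h y)
  rw [hfun]
  refine ContDiff.sum fun i _ => ContDiff.sum fun j _ => ?_
  exact (((c i).contDiff.comp hg).mul ((c j).contDiff.comp hh)).mul ((hsm (b i) (b j)).comp hf)

private lemma hr_master1_contDiff (ω : E → E → ℝ)
    (hsm : ∀ u, ContDiff ℝ (⊤ : ℕ∞) fun x => ω x u)
    (hlin : ∀ x, ∃ l : E →ₗ[ℝ] ℝ, ⇑l = ω x)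
    {f g : X → E} (hf : ContDiff ℝ (⊤ : ℕ∞) f) (hg : ContDiff ℝ (⊤ : ℕ∞) g) :
    ContDiff ℝ (⊤ : ℕ∞) fun y => ω (f y) (g y) := by
  classical
  set b : Module.Basis (Fin (Module.finrank ℝ E)) ℝ E := Module.finBasis ℝ E with hb
  set c : Fin (Module.finrank ℝ E) → E →L[ℝ] ℝ :=
    fun i => LinearMap.toContinuousLinearMap (b.coord i) with hcdef
  have hca : ∀ i (e : E), c i e = b.repr e i := fun i e => rfl
  have hfun : (fun y => ω (f y) (g y))
      = fun y => ∑ i, c i (g y) * ω (f y) (b i) :=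
    funext fun y => by simpa [hca] using hr_key1 ω hlin (f y) (g y)
  rw [hfun]
  refine ContDiff.sum fun i _ => ?_
  exact ((c i).contDiff.comp hg).mul ((hsm (b i)).comp hf)


private lemma hr_snd_symm {f : X → E} (hf : ContDiff ℝ (⊤ : ℕ∞) f) (x u v : X) :
    fderiv ℝ (fun y => fderiv ℝ f y v) x u = fderiv ℝ (fun y => fderiv ℝ f y u) x v := by
  have hd1 : ∀ y, HasFDerivAt f (fderiv ℝ f y) y := fun y =>
    (hf.differentiable (by simp) y).hasFDerivAt
  have hfd : ContDiff ℝ (⊤ : ℕ∞) (fderiv ℝ f) := hf.fderiv_right (by simp)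
  have hdd : HasFDerivAt (fderiv ℝ f) (fderiv ℝ (fderiv ℝ f) x) x :=
    ((hfd.differentiable (by simp)) x).hasFDerivAt
  have key : ∀ w : X, fderiv ℝ (fun y => fderiv ℝ f y w) x
      = (fderiv ℝ (fderiv ℝ f) x).flip w := by
    intro w
    have h := fderiv_clm_apply (𝕜 := ℝ) (c := fderiv ℝ f) (u := fun _ => w) (x := x)
      ((hfd.differentiable (by simp)) x) (differentiableAt_const w)
    simpa using h
  rw [key u, key v]
  simp only [ContinuousLinearMap.flip_apply]
  exact second_derivative_symmetric hd1 hdd u v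

private lemma hr_d2_pullback (Ω : E → E → E → ℝ)
    (hsm : ∀ u v, ContDiff ℝ (⊤ : ℕ∞) fun x => Ω x u v)
    (hbil : ∀ x, ∃ B : E →ₗ[ℝ] E →ₗ[ℝ] ℝ, ∀ u v, B u v = Ω x u v)
    (halt : ∀ x u v, Ω x u v = -Ω x v u)
    {f : X → E} (hf : ContDiff ℝ (⊤ : ℕ∞) f) (x u v w : X) :
    d2 (pb2 f Ω) x u v w
      = d2 Ω (f x) (fderiv ℝ f x u) (fderiv ℝ f x v) (fderiv ℝ f x w) := by
  have hdf : ∀ a : X, ContDiff ℝ (⊤ : ℕ∞) (fun y => fderiv ℝ f y a) := fun a =>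
    (hf.fderiv_right (by simp)).clm_apply contDiff_const
  have hdfd : ∀ a : X, DifferentiableAt ℝ (fun y => fderiv ℝ f y a) x := fun a =>
    ((hdf a).differentiable (by simp)) x
  have hfd : DifferentiableAt ℝ f x := (hf.differentiable (by simp)) x
  have key : ∀ (a b e : X), fderiv ℝ (fun y => Ω (f y) (fderiv ℝ f y a) (fderiv ℝ f y b)) x e
      = fderiv ℝ (fun z => Ω z (fderiv ℝ f x a) (fderiv ℝ f x b)) (f x) (fderiv ℝ f x e)
        + Ω (f x) (fderiv ℝ (fun y => fderiv ℝ f y a) x e) (fderiv ℝ f x b)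
        + Ω (f x) (fderiv ℝ f x a) (fderiv ℝ (fun y => fderiv ℝ f y b) x e) :=
    fun a b e => hr_master2_fderiv Ω hsm hbil hfd (hdfd a) (hdfd b) e
  simp only [d2, pb2]
  rw [key v w u, key u w v, key u v w]
  set du := fderiv ℝ f x u
  set dv := fderiv ℝ f x v
  set dw := fderiv ℝ f x w
  set suv := fderiv ℝ (fun y => fderiv ℝ f y v) x u with hsuv
  set svu := fderiv ℝ (fun y => fderiv ℝ f y u) x v with hsvu
  set suw := fderiv ℝ (fun y => fderiv ℝ f y w) x u with hsuw
  set swu := fderiv ℝ (fun y => fderiv ℝ f y u) x w with hswu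
  set svw := fderiv ℝ (fun y => fderiv ℝ f y w) x v with hsvw
  set swv := fderiv ℝ (fun y => fderiv ℝ f y v) x w with hswv
  have h1 : suv = svu := by rw [hsuv, hsvu]; exact hr_snd_symm hf x u v
  have h2 : suw = swu := by rw [hsuw, hswu]; exact hr_snd_symm hf x u w
  have h3 : svw = swv := by rw [hsvw, hswv]; exact hr_snd_symm hf x v w
  rw [h1, h2, h3]
  have e1 := halt (f x) swu dv
  have e2 := halt (f x) du swv
  linarith [e1, e2]

private lemma hr_d1_pullback (ω : E → E → ℝ)
    (hsm : ∀ u, ContDiff ℝ (⊤ : ℕ∞) fun x => ω x u)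
    (hlin : ∀ x, ∃ l : E →ₗ[ℝ] ℝ, ⇑l = ω x)
    {f : X → E} (hf : ContDiff ℝ (⊤ : ℕ∞) f) (x u v : X) :
    d1 (pb1 f ω) x u v
      = d1 ω (f x) (fderiv ℝ f x u) (fderiv ℝ f x v) := by
  have hdf : ∀ a : X, ContDiff ℝ (⊤ : ℕ∞) (fun y => fderiv ℝ f y a) := fun a =>
    (hf.fderiv_right (by simp)).clm_apply contDiff_const
  have hdfd : ∀ a : X, DifferentiableAt ℝ (fun y => fderiv ℝ f y a) x := fun a =>
    ((hdf a).differentiable (by simp)) x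
  have hfd : DifferentiableAt ℝ f x := (hf.differentiable (by simp)) x
  have key : ∀ (a e : X), fderiv ℝ (fun y => ω (f y) (fderiv ℝ f y a)) x e
      = fderiv ℝ (fun z => ω z (fderiv ℝ f x a)) (f x) (fderiv ℝ f x e)
        + ω (f x) (fderiv ℝ (fun y => fderiv ℝ f y a) x e) :=
    fun a e => hr_master1_fderiv ω hsm hlin hfd (hdfd a) e
  simp only [d1, pb1]
  rw [key v u, key u v]
  have h1 : fderiv ℝ (fun y => fderiv ℝ f y v) x u
      = fderiv ℝ (fun y => fderiv ℝ f y u) x v := hr_snd_symm hf x u v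
  rw [h1]
  ring

end Master



section Sigma

variable {Q' N : Type*} [NormedAddCommGroup Q'] [NormedSpace ℝ Q'] [FiniteDimensional ℝ Q']
  [NormedAddCommGroup N] [NormedSpace ℝ N] [FiniteDimensional ℝ N]

private lemma hr_exists_sigma (p : Q' → (Q' →L[ℝ] N)) (hp : ContDiff ℝ (⊤ : ℕ∞) p)
    (hsurj : ∀ q, Function.Surjective (p q)) :
    ∃ σ : Q' → (N →L[ℝ] Q'), ContDiff ℝ (⊤ : ℕ∞) σ ∧ ∀ q n, p q (σ q n) = n := by
  classical
  set EQ := EuclideanSpace ℝ (Fin (Module.finrank ℝ Q'))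
  set EN := EuclideanSpace ℝ (Fin (Module.finrank ℝ N))
  set eQ : Q' ≃L[ℝ] EQ := toEuclidean
  set eN : N ≃L[ℝ] EN := toEuclidean
  set pt : Q' → (EQ →L[ℝ] EN) := fun x =>
    (eN : N →L[ℝ] EN).comp ((p x).comp (eQ.symm : EQ →L[ℝ] Q')) with hptdef
  have hpt : ContDiff ℝ (⊤ : ℕ∞) pt :=
    (contDiff_const (c := (eN : N →L[ℝ] EN))).clm_comp
      (hp.clm_comp (contDiff_const (c := (eQ.symm : EQ →L[ℝ] Q'))))
  have hptsurj : ∀ x, Function.Surjective (pt x) := by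
    intro x z
    obtain ⟨q, hq⟩ := hsurj x (eN.symm z)
    exact ⟨eQ q, by simp [hptdef, hq]⟩
  set A : Q' → (EN →L[ℝ] EQ) := fun x => ContinuousLinearMap.adjoint (pt x) with hAdef
  have hA : ContDiff ℝ (⊤ : ℕ∞) A := by
    have : A = fun x => (ContinuousLinearMap.adjoint (𝕜 := ℝ) (E := EQ)
        (F := EN)).toContinuousLinearEquiv.toContinuousLinearMap (pt x) := by
      funext x; rfl
    rw [this]
    exact (ContinuousLinearMap.contDiff _).comp hpt
  set G : Q' → (EN →L[ℝ] EN) := fun x => (pt x).comp (A x) with hGdef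
  have hG : ContDiff ℝ (⊤ : ℕ∞) G := hpt.clm_comp hA
  have hAinj : ∀ x (z : EN), A x z = 0 → z = 0 := by
    intro x z hz
    obtain ⟨u, hu⟩ := hptsurj x z
    have : (inner ℝ z z : ℝ) = 0 := by
      calc (inner ℝ z z : ℝ) = inner ℝ (pt x u) z := by rw [hu]
      _ = inner ℝ u (A x z) := (ContinuousLinearMap.adjoint_inner_right (pt x) u z).symm
      _ = 0 := by rw [hz]; simp
    simpa using inner_self_eq_zero.mp this
  have hGinj : ∀ x, Function.Injective (G x) := by
    intro x
    have h0 : ∀ z, G x z = 0 → z = 0 := by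
      intro z hz
      have hinner : (inner ℝ (A x z) (A x z) : ℝ) = 0 := by
        calc (inner ℝ (A x z) (A x z) : ℝ) = inner ℝ z (pt x (A x z)) :=
          ContinuousLinearMap.adjoint_inner_left (pt x) (A x z) z
        _ = inner ℝ z (G x z) := rfl
        _ = 0 := by rw [hz]; simp
      exact hAinj x z (inner_self_eq_zero.mp hinner)
    intro a b hab
    have hz : G x (a - b) = 0 := by rw [map_sub, hab, sub_self]
    exact sub_eq_zero.mp (h0 _ hz)
  have hGbij : ∀ x, Function.Bijective (G x) := by
    intro x
    refine ⟨hGinj x, ?_⟩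
    have := (LinearMap.injective_iff_surjective
      (f := ((G x : EN →ₗ[ℝ] EN)))).mp (hGinj x)
    exact this
  have hGunit : ∀ x, IsUnit (G x) := by
    intro x
    set le := LinearEquiv.ofBijective ((G x : EN →ₗ[ℝ] EN)) (hGbij x) with hle
    have hle_apply : ∀ z, le z = G x z := fun z => rfl
    refine ⟨⟨G x, LinearMap.toContinuousLinearMap (le.symm : EN →ₗ[ℝ] EN), ?_, ?_⟩, rfl⟩
    · refine ContinuousLinearMap.ext fun z => ?_
      have h2 : le (le.symm z) = z := le.apply_symm_apply z
      simpa [ContinuousLinearMap.mul_apply, hle_apply] using h2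
    · refine ContinuousLinearMap.ext fun z => ?_
      have h2 : le.symm (le z) = z := le.symm_apply_apply z
      simpa [ContinuousLinearMap.mul_apply, hle_apply] using h2
  have hRinv : ∀ x z, G x (Ring.inverse (G x) z) = z := by
    intro x z
    have h := Ring.mul_inverse_cancel (G x) (hGunit x)
    have h2 := congrArg (fun (L : EN →L[ℝ] EN) => L z) h
    simpa [ContinuousLinearMap.mul_apply] using h2
  have hRC : ContDiff ℝ (⊤ : ℕ∞) fun x => Ring.inverse (G x) := by
    rw [contDiff_iff_contDiffAt]
    intro x
    have h1 : ContDiffAt ℝ (⊤ : ℕ∞) Ring.inverse (G x) := by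
      have := contDiffAt_ringInverse (𝕜 := ℝ) (n := (⊤ : ℕ∞)) ((hGunit x).unit)
      simpa [IsUnit.unit_spec] using this
    exact h1.comp x hG.contDiffAt
  refine ⟨fun x => ((eQ.symm : EQ →L[ℝ] Q').comp
      ((A x).comp ((Ring.inverse (G x)).comp (eN : N →L[ℝ] EN)))), ?_, ?_⟩
  · exact (contDiff_const (c := (eQ.symm : EQ →L[ℝ] Q'))).clm_comp
      (hA.clm_comp (hRC.clm_comp (contDiff_const (c := (eN : N →L[ℝ] EN)))))
  · intro q n
    set z := Ring.inverse (G q) (eN n) with hz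
    have h1 : (((eQ.symm : EQ →L[ℝ] Q').comp
        ((A q).comp ((Ring.inverse (G q)).comp (eN : N →L[ℝ] EN)))) n)
        = eQ.symm (A q z) := by simp [hz]
    rw [h1]
    have h2 : pt q (A q z) = eN n := hRinv q (eN n)
    have h3 : pt q (A q z) = eN (p q (eQ.symm (A q z))) := by
      simp [hptdef]
    apply eN.injective
    rw [← h3, h2]


private lemma hr_submersion (π : Q' → N) (hπ : ContDiff ℝ (⊤ : ℕ∞) π) (a : Q')
    (hsurj : Function.Surjective (fderiv ℝ π a)) :
    (∃ s : N → Q', s (π a) = a ∧ ContDiffAt ℝ (⊤ : ℕ∞) s (π a) ∧ ∀ᶠ y in 𝓝 (π a), π (s y) = y) ∧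
    (∀ᶠ q in 𝓝 a, ∀ G : Q' → ℝ, ContDiff ℝ (⊤ : ℕ∞) G →
      (∀ (x Z : Q'), fderiv ℝ π x Z = 0 → fderiv ℝ G x Z = 0) →
      π q = π a → G q = G a) := by
  classical
  have hπdiff : Differentiable ℝ π := hπ.differentiable (by simp)
  set K : Submodule ℝ Q' := LinearMap.ker (fderiv ℝ π a : Q' →ₗ[ℝ] N) with hK
  obtain ⟨C, hC⟩ := Submodule.exists_isCompl K
  set prD : Q' →ₗ[ℝ] ↥K := K.linearProjOfIsCompl C hC with hprD
  set prDc : Q' →L[ℝ] ↥K := LinearMap.toContinuousLinearMap prD with hprDc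
  set M : Q' →L[ℝ] N × ↥K := (fderiv ℝ π a).prod prDc with hM
  set φ : Q' → N × ↥K := fun x => (π x, prDc (x - a)) with hφdef
  have hφ : ContDiff ℝ (⊤ : ℕ∞) φ := hπ.prodMk (prDc.contDiff.comp (contDiff_id.sub contDiff_const))
  have hφd : HasFDerivAt φ M a := by
    have h2 : HasFDerivAt (fun x : Q' => prDc (x - a)) prDc a := by
      exact prDc.hasFDerivAt.comp a ((hasFDerivAt_id a).sub_const a)
    exact (hπdiff a).hasFDerivAt.prodMk h2
  have hprDK : ∀ z : ↥K, prD (z : Q') = z := fun z =>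
    Submodule.linearProjOfIsCompl_apply_left hC z
  have Mbij : Function.Bijective M := by
    constructor
    · intro x y hxy
      have hz : M (x - y) = 0 := by rw [map_sub, hxy, sub_self]
      have h1 : fderiv ℝ π a (x - y) = 0 := congrArg Prod.fst hz
      have h2 : prDc (x - y) = 0 := congrArg Prod.snd hz
      have hmem : x - y ∈ K := LinearMap.mem_ker.mpr h1
      have h3 : prD (x - y) = (⟨x - y, hmem⟩ : ↥K) := hprDK ⟨x - y, hmem⟩
      have h4 : prDc (x - y) = prD (x - y) := rfl
      rw [h4, h3] at h2
      have : x - y = (0 : Q') := by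
        have := congrArg (Subtype.val) h2
        simpa using this
      exact sub_eq_zero.mp this
    · rintro ⟨n, d⟩
      obtain ⟨za, hza⟩ := hsurj n
      refine ⟨za + ((d : Q') - (prD za : Q')), ?_⟩
      have hmemd : ((d : Q') - (prD za : Q')) ∈ K := sub_mem d.2 (prD za).2
      have hfst : fderiv ℝ π a (za + ((d : Q') - (prD za : Q'))) = n := by
        rw [map_add, hza, show fderiv ℝ π a ((d : Q') - (prD za : Q')) = 0 from LinearMap.mem_ker.mp hmemd, add_zero]
      have hsnd : prDc (za + ((d : Q') - (prD za : Q'))) = d := by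
        have : prD (za + ((d : Q') - (prD za : Q'))) = d := by
          rw [map_add]
          have h5 : prD ((d : Q') - (prD za : Q')) = (⟨_, hmemd⟩ : ↥K) :=
            hprDK ⟨_, hmemd⟩
          rw [h5]
          ext
          simp
        exact this
      exact Prod.ext hfst hsnd
  set le : Q' ≃ₗ[ℝ] N × ↥K := LinearEquiv.ofBijective (M : Q' →ₗ[ℝ] N × ↥K) Mbij with hle
  set Le : Q' ≃L[ℝ] N × ↥K := le.toContinuousLinearEquiv with hLedef
  have hLe : (Le : Q' →L[ℝ] N × ↥K) = M := by
    refine ContinuousLinearMap.ext fun z => rfl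
  have hf' : HasFDerivAt φ ((Le : Q' ≃L[ℝ] N × ↥K) : Q' →L[ℝ] N × ↥K) a := by
    rw [hLe]; exact hφd
  have hn1 : (1 : WithTop ℕ∞) ≤ ⊤ := le_top
  have hφca : ContDiffAt ℝ (⊤ : ℕ∞) φ a := hφ.contDiffAt
  set hst : HasStrictFDerivAt φ ((Le : Q' ≃L[ℝ] N × ↥K) : Q' →L[ℝ] N × ↥K) a :=
    hφca.hasStrictFDerivAt' hf' (by simp) with hstdef
  set inv : N × ↥K → Q' := hst.localInverse φ Le a with hinvdef
  have hinva : inv (φ a) = a := hst.localInverse_apply_image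
  have hev_r : ∀ᶠ z in 𝓝 (φ a), φ (inv z) = z := hst.eventually_right_inverse
  have hev_l : ∀ᶠ x in 𝓝 a, inv (φ x) = x := hst.eventually_left_inverse
  have hinv_smooth : ContDiffAt ℝ (⊤ : ℕ∞) inv (φ a) := hφca.to_localInverse hf' (by simp)
  have hφa : φ a = (π a, 0) := by
    simp [hφdef]
  constructor
  · -- local section
    refine ⟨fun y => inv (y, 0), ?_, ?_, ?_⟩
    · show inv (π a, 0) = a
      rw [← hφa, hinva]
    · have hmap : ContDiffAt ℝ (⊤ : ℕ∞) (fun y : N => ((y, 0) : N × ↥K)) (π a) :=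
        contDiffAt_id.prodMk contDiffAt_const
      have : ContDiffAt ℝ (⊤ : ℕ∞) inv ((π a, 0) : N × ↥K) := by rw [← hφa]; exact hinv_smooth
      exact this.comp (π a) hmap
    · have hc : Filter.Tendsto (fun y : N => ((y, 0) : N × ↥K)) (𝓝 (π a)) (𝓝 (φ a)) := by
        rw [hφa]
        exact (continuous_id.prodMk continuous_const).continuousAt
      have := hc.eventually hev_r
      exact this.mono fun y hy => congrArg Prod.fst hy
  · -- local fiber constancy
    have hOex := (contDiffWithinAt_univ.mpr hinv_smooth).contDiffOn'
      (m := 1) (by simp) (by simp)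
    obtain ⟨O, hOopen, hOmem, hOdiff⟩ := hOex
    rw [Set.insert_eq_of_mem (Set.mem_univ _), Set.univ_inter] at hOdiff
    have hζ : Filter.Tendsto (fun d : ↥K => ((π a, d) : N × ↥K)) (𝓝 0) (𝓝 (φ a)) := by
      rw [hφa]
      exact (continuous_const.prodMk continuous_id).continuousAt
    have hb1 : ∀ᶠ d in 𝓝 (0 : ↥K), φ (inv (π a, d)) = (π a, d) := hζ.eventually hev_r
    have hb2 : ∀ᶠ d in 𝓝 (0 : ↥K), ((π a, d) : N × ↥K) ∈ O :=
      hζ.eventually (hOopen.mem_nhds hOmem |> Filter.eventually_mem_set.mpr)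
    obtain ⟨r, hr, hball⟩ := Metric.eventually_nhds_iff_ball.mp (hb1.and hb2)
    set h : ↥K → Q' := fun d => inv (π a, d) with hhdef
    have hπh : ∀ d ∈ Metric.ball (0 : ↥K) r, π (h d) = π a := fun d hd =>
      congrArg Prod.fst ((hball d hd).1)
    have hdiffh : ∀ d ∈ Metric.ball (0 : ↥K) r, DifferentiableAt ℝ h d := by
      intro d hd
      have hinvd : DifferentiableAt ℝ inv ((π a, d) : N × ↥K) :=
        (hOdiff.differentiableOn one_ne_zero).differentiableAt
          (hOopen.mem_nhds (hball d hd).2)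
      exact hinvd.comp d ((differentiableAt_const _).prodMk differentiableAt_id)
    have hh0 : h 0 = a := by
      show inv (π a, 0) = a
      rw [← hφa, hinva]
    -- the eventual set
    have hcont : Filter.Tendsto (fun q => prDc (q - a)) (𝓝 a) (𝓝 0) := by
      have h0 : prDc (a - a) = 0 := by simp
      have hcc : Continuous (fun q : Q' => prDc (q - a)) :=
        prDc.continuous.comp (continuous_id.sub continuous_const)
      have := hcc.continuousAt (x := a)
      rwa [ContinuousAt, h0] at this
    have hmem2 : ∀ᶠ q in 𝓝 a, prDc (q - a) ∈ Metric.ball (0 : ↥K) r :=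
      hcont.eventually (Filter.eventually_mem_set.mpr (Metric.ball_mem_nhds 0 hr))
    filter_upwards [hev_l, hmem2] with q hq1 hq2 G hG hGker hπq
    -- q = h d
    have hφq : φ q = ((π a, prDc (q - a)) : N × ↥K) := by
      rw [hφdef]; simp only []; rw [hπq]
    have hqh : q = h (prDc (q - a)) := by
      rw [hhdef]; simp only []; rw [← hφq, hq1]
    -- zero derivative of g on the ball
    set g : ↥K → ℝ := fun d => G (h d) with hgdef
    have claim : ∀ d ∈ Metric.ball (0 : ↥K) r,
        HasFDerivWithinAt g (0 : ↥K →L[ℝ] ℝ) (Metric.ball (0 : ↥K) r) d := by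
      intro d hd
      have hhd := hdiffh d hd
      have hGd : DifferentiableAt ℝ G (h d) := (hG.differentiable (by simp)) _
      have hgd : DifferentiableAt ℝ g d := hGd.comp d hhd
      have hcomp : fderiv ℝ g d = (fderiv ℝ G (h d)).comp (fderiv ℝ h d) :=
        fderiv_comp d hGd hhd
      have hπcomp : (fderiv ℝ π (h d)).comp (fderiv ℝ h d) = 0 := by
        have hc2 : fderiv ℝ (fun d' => π (h d')) d = (fderiv ℝ π (h d)).comp (fderiv ℝ h d) :=
          fderiv_comp d (hπdiff _) hhd
        have hconst : (fun d' => π (h d')) =ᶠ[𝓝 d] fun _ => π a :=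
          Filter.eventually_of_mem (Metric.isOpen_ball.mem_nhds hd) fun d' hd' => hπh d' hd'
        rw [← hc2, hconst.fderiv_eq, fderiv_fun_const]
        rfl
      have hzero : (fderiv ℝ G (h d)).comp (fderiv ℝ h d) = 0 := by
        refine ContinuousLinearMap.ext fun z => ?_
        have hZ : fderiv ℝ π (h d) (fderiv ℝ h d z) = 0 := by
          have := congrArg (fun (L : ↥K →L[ℝ] N) => L z) hπcomp
          simpa using this
        simpa using hGker (h d) (fderiv ℝ h d z) hZ
      have h4 : fderiv ℝ g d = 0 := hcomp.trans hzero
      have h5 : HasFDerivAt g (0 : ↥K →L[ℝ] ℝ) d := h4 ▸ hgd.hasFDerivAt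
      exact h5.hasFDerivWithinAt
    have hgconst := (convex_ball (0 : ↥K) r).norm_image_sub_le_of_norm_hasFDerivWithin_le
      (f' := fun _ => (0 : ↥K →L[ℝ] ℝ)) (C := 0) claim (fun x _ => by simp)
      (Metric.mem_ball_self hr) hq2
    have : g (prDc (q - a)) = g 0 := by
      have := hgconst
      rw [zero_mul] at this
      have h6 := norm_le_zero_iff.mp this
      exact sub_eq_zero.mp h6
    calc G q = g (prDc (q - a)) := by rw [hgdef]; simp only []; rw [← hqh]
    _ = g 0 := this
    _ = G a := by rw [hgdef]; simp only []; rw [hh0]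

end Sigma

end HRAux
open scoped Topology


set_option maxHeartbeats 4000000 in
/-- sufficiency in the Haller–Rybicki reduction of locally conformal
symplectic *forms*: if `ι*ω` annihilates all sections of the characteristic distribution,
then `ι*Ω` descends to a locally conformal symplectic form `τ` on `N = Q/F` with
`π*τ = ι*Ω`, whose Lee form `α` satisfies `π*α = ι*ω`. -/
theorem lcs_form_reduction_sufficient
    {E : Type*} [NormedAddCommGroup E] [NormedSpace ℝ E] [FiniteDimensional ℝ E]
    {n : ℕ} (hdim : Module.finrank ℝ E = 2 * n) (hn : 1 < n)
    (Ω : E → E → E → ℝ) (ω : E → E → ℝ) (hlcs : IsLCS Ω ω)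
    {Q' : Type*} [NormedAddCommGroup Q'] [NormedSpace ℝ Q'] [FiniteDimensional ℝ Q']
    (ι : Q' → E) (hι : ContDiff ℝ (⊤ : ℕ∞) ι) (hιinj : Function.Injective ι)
    (hιemb : Topology.IsEmbedding ι)
    (hιimm : ∀ q, Function.Injective (fderiv ℝ ι q))
    -- the characteristic distribution `D = TQ^Ω ∩ TQ = ker ι*Ω` (in `Q'`-coordinates):
    (D : Q' → Submodule ℝ Q')
    (hD : ∀ q u, u ∈ D q ↔
      ∀ w : Q', Ω (ι q) (fderiv ℝ ι q u) (fderiv ℝ ι q w) = 0)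
    {k : ℕ} (hconst : ∀ q, Module.finrank ℝ (D q) = k)
    -- `N = Q/F`, a smooth manifold of dimension `> 2`, with the canonical projection
    -- `π : Q → N`, a submersion whose connected fibers are the leaves of `F`,
    -- `ker π_* = TQ^Ω ∩ TQ`:
    {N : Type*} [NormedAddCommGroup N] [NormedSpace ℝ N] [FiniteDimensional ℝ N]
    (hN : 2 < Module.finrank ℝ N)
    (π : Q' → N) (hπ : ContDiff ℝ (⊤ : ℕ∞) π) (hπsurj : Function.Surjective π)
    (hπsub : ∀ q, Function.Surjective (fderiv ℝ π q))
    (hker : ∀ q, LinearMap.ker ((fderiv ℝ π q : Q' →L[ℝ] N) : Q' →ₗ[ℝ] N) = D q)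
    (hfib : ∀ y : N, IsConnected (π ⁻¹' {y}))
    (hωD : ∀ X : Q' → Q', ContDiff ℝ (⊤ : ℕ∞) X → (∀ q, X q ∈ D q) →
      ∀ q, ω (ι q) (fderiv ℝ ι q (X q)) = 0) :
    ∃ (τ : N → N → N → ℝ) (α : N → N → ℝ), IsLCS τ α ∧
      (∀ q u v, τ (π q) (fderiv ℝ π q u) (fderiv ℝ π q v) =
        Ω (ι q) (fderiv ℝ ι q u) (fderiv ℝ ι q v)) ∧
      (∀ q u, α (π q) (fderiv ℝ π q u) = ω (ι q) (fderiv ℝ ι q u)) := by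
  classical
  obtain ⟨hΩsm, ⟨hΩbil, hΩalt⟩, hΩnd, hωsm, hωlin, hωcl, hd2Ω⟩ := hlcs
  have hπd : Differentiable ℝ π := hπ.differentiable (by simp)
  have hιd : Differentiable ℝ ι := hι.differentiable (by simp)
  set p : Q' → Q' →L[ℝ] N := fun q => fderiv ℝ π q with hpdef
  have hp : ContDiff ℝ (⊤ : ℕ∞) p := hπ.fderiv_right (by simp)
  have hker' : ∀ (q Z : Q'), Z ∈ D q ↔ p q Z = 0 := by
    intro q Z
    rw [← hker q]
    exact Iff.rfl
  obtain ⟨σ, hσ, hσp⟩ := hr_exists_sigma p hp hπsub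
  set Ω' : Q' → Q' → Q' → ℝ := pb2 ι Ω with hΩ'def
  set ω' : Q' → Q' → ℝ := pb1 ι ω with hω'def
  have hΩ'eq : ∀ q u v, Ω' q u v = Ω (ι q) (fderiv ℝ ι q u) (fderiv ℝ ι q v) :=
    fun q u v => rfl
  have hω'eq : ∀ q u, ω' q u = ω (ι q) (fderiv ℝ ι q u) := fun q u => rfl
  have hdι : ∀ a : Q', ContDiff ℝ (⊤ : ℕ∞) (fun q => fderiv ℝ ι q a) := fun a =>
    (hι.fderiv_right (by simp)).clm_apply contDiff_const
  have hΩ'sm : ∀ u v, ContDiff ℝ (⊤ : ℕ∞) fun q => Ω' q u v := fun u v =>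
    hr_master2_contDiff Ω hΩsm hΩbil hι (hdι u) (hdι v)
  have hΩ'bil : ∀ q, ∃ B : Q' →ₗ[ℝ] Q' →ₗ[ℝ] ℝ, ∀ u v, B u v = Ω' q u v := by
    intro q
    obtain ⟨B, hB⟩ := hΩbil (ι q)
    refine ⟨B.compl₁₂ ((fderiv ℝ ι q : Q' →L[ℝ] E) : Q' →ₗ[ℝ] E)
      ((fderiv ℝ ι q : Q' →L[ℝ] E) : Q' →ₗ[ℝ] E), fun u v => ?_⟩
    rw [LinearMap.compl₁₂_apply, hB]
    rfl
  have hΩ'alt : ∀ q u v, Ω' q u v = -Ω' q v u := fun q u v => hΩalt _ _ _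
  have hω'sm : ∀ u, ContDiff ℝ (⊤ : ℕ∞) fun q => ω' q u := fun u =>
    hr_master1_contDiff ω hωsm hωlin hι (hdι u)
  have hω'lin : ∀ q, ∃ l : Q' →ₗ[ℝ] ℝ, ⇑l = ω' q := by
    intro q
    obtain ⟨l, hl⟩ := hωlin (ι q)
    refine ⟨l.comp ((fderiv ℝ ι q : Q' →L[ℝ] E) : Q' →ₗ[ℝ] E), funext fun u => ?_⟩
    simp only [LinearMap.comp_apply]
    rw [show (((fderiv ℝ ι q : Q' →L[ℝ] E) : Q' →ₗ[ℝ] E) u) = fderiv ℝ ι q u from rfl, hl]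
    rfl
  have hΩ'D : ∀ q z, z ∈ D q → ∀ w, Ω' q z w = 0 := fun q z hz w => (hD q z).mp hz w
  have hΩ'subst1 : ∀ q (a a' bb : Q'), a - a' ∈ D q → Ω' q a bb = Ω' q a' bb := by
    intro q a a' bb hmem
    obtain ⟨B, hB⟩ := hΩ'bil q
    have h0 : B (a - a') bb = 0 := by rw [hB]; exact hΩ'D q _ hmem bb
    rw [map_sub, LinearMap.sub_apply] at h0
    have := sub_eq_zero.mp h0
    rw [← hB, ← hB]
    exact this
  have hΩ'subst2 : ∀ q (a bb bb' : Q'), bb - bb' ∈ D q → Ω' q a bb = Ω' q a bb' := by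
    intro q a bb bb' hmem
    rw [hΩ'alt q a bb, hΩ'alt q a bb', hΩ'subst1 q bb bb' a hmem]
  have hω'D : ∀ q z, z ∈ D q → ω' q z = 0 := by
    intro q z hz
    set X : Q' → Q' := fun x => z - σ x (p x z) with hXdef
    have hXsm : ContDiff ℝ (⊤ : ℕ∞) X := contDiff_const.sub (hσ.clm_apply (hp.clm_apply contDiff_const))
    have hXD : ∀ x, X x ∈ D x := by
      intro x
      refine (hker' x _).mpr ?_
      rw [hXdef]
      simp only [map_sub, hσp]
      exact sub_self _
    have hXq : X q = z := by
      rw [hXdef]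
      simp only []
      rw [(hker' q z).mp hz, map_zero, sub_zero]
    have h := hωD X hXsm hXD q
    rw [hXq] at h
    exact h
  have hω'subst : ∀ q (a a' : Q'), a - a' ∈ D q → ω' q a = ω' q a' := by
    intro q a a' hmem
    obtain ⟨l, hl⟩ := hω'lin q
    have h0 : l (a - a') = 0 := by
      rw [show l (a - a') = ω' q (a - a') from by rw [hl]]
      exact hω'D q _ hmem
    rw [map_sub] at h0
    have := sub_eq_zero.mp h0
    rw [← congrFun hl a, ← congrFun hl a']
    exact this
  have hd2Ω' : ∀ q u v w, d2 Ω' q u v w = wedge12 ω' Ω' q u v w := by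
    intro q u v w
    have h1 : d2 Ω' q u v w
        = d2 Ω (ι q) (fderiv ℝ ι q u) (fderiv ℝ ι q v) (fderiv ℝ ι q w) := by
      rw [hΩ'def]
      exact hr_d2_pullback Ω hΩsm hΩbil hΩalt hι q u v w
    rw [h1, hd2Ω]
    rfl
  have hd1ω' : ∀ q u v, d1 ω' q u v = 0 := by
    intro q u v
    have h1 : d1 ω' q u v = d1 ω (ι q) (fderiv ℝ ι q u) (fderiv ℝ ι q v) := by
      rw [hω'def]
      exact hr_d1_pullback ω hωsm hωlin hι q u v
    rw [h1]
    exact hωcl _ _ _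
  -- master expansion over Q' with f = id
  have hmaster2 : ∀ (g h : Q' → Q') (y : Q'), DifferentiableAt ℝ g y → DifferentiableAt ℝ h y →
      ∀ e, fderiv ℝ (fun x => Ω' x (g x) (h x)) y e
        = fderiv ℝ (fun z => Ω' z (g y) (h y)) y e
          + Ω' y (fderiv ℝ g y e) (h y) + Ω' y (g y) (fderiv ℝ h y e) := by
    intro g h y hg hh e
    have hid : DifferentiableAt ℝ (fun x : Q' => x) y := differentiableAt_id
    have := hr_master2_fderiv Ω' hΩ'sm hΩ'bil (f := fun x : Q' => x) hid hg hh e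
    simpa [fderiv_id'] using this
  have hmaster1 : ∀ (g : Q' → Q') (y : Q'), DifferentiableAt ℝ g y →
      ∀ e, fderiv ℝ (fun x => ω' x (g x)) y e
        = fderiv ℝ (fun z => ω' z (g y)) y e + ω' y (fderiv ℝ g y e) := by
    intro g y hg e
    have hid : DifferentiableAt ℝ (fun x : Q' => x) y := differentiableAt_id
    have := hr_master1_fderiv ω' hω'sm hω'lin (f := fun x : Q' => x) hid hg e
    simpa [fderiv_id'] using this
  -- the canonical vertical field through (y, Z)
  have hbr2 : ∀ (V W : Q' → Q') (y : Q'), ContDiff ℝ (⊤ : ℕ∞) V → ContDiff ℝ (⊤ : ℕ∞) W →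
      (∃ cV, ∀ x, p x (V x) = cV) → (∃ cW, ∀ x, p x (W x) = cW) →
      fderiv ℝ V y (W y) - fderiv ℝ W y (V y) ∈ D y := by
    intro V W y hVsm hWsm hVex hWex
    obtain ⟨cV, hVc⟩ := hVex
    obtain ⟨cW, hWc⟩ := hWex
    have hfd : ∀ (V : Q' → Q') (cV : N), ContDiff ℝ (⊤ : ℕ∞) V → (∀ x, p x (V x) = cV) →
        ∀ e, p y (fderiv ℝ V y e) = -(fderiv ℝ p y e (V y)) := by
      intro V cV hVsm hVc e
      have hconst : (fun x => p x (V x)) = fun _ => cV := funext hVc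
      have hfz : fderiv ℝ (fun x => p x (V x)) y = 0 := by rw [hconst]; exact fderiv_const_apply cV
      have hexp : fderiv ℝ (fun x => p x (V x)) y
          = (p y).comp (fderiv ℝ V y) + (fderiv ℝ p y).flip (V y) :=
        fderiv_clm_apply ((hp.differentiable (by simp)) y) ((hVsm.differentiable (by simp)) y)
      have h3 := congrArg (fun (L : Q' →L[ℝ] N) => L e) (hfz.symm.trans hexp)
      simp only [ContinuousLinearMap.add_apply, ContinuousLinearMap.comp_apply,
        ContinuousLinearMap.flip_apply, ContinuousLinearMap.zero_apply] at h3
      have h4 : p y (fderiv ℝ V y e) + fderiv ℝ p y e (V y) = 0 := h3.symm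
      exact add_eq_zero_iff_eq_neg.mp h4
    have h1 := hfd V cV hVsm hVc (W y)
    have h2 := hfd W cW hWsm hWc (V y)
    have hsymm : fderiv ℝ p y (W y) (V y) = fderiv ℝ p y (V y) (W y) :=
      second_derivative_symmetric (fun x => (hπd x).hasFDerivAt)
        (((hp.differentiable (by simp)) y).hasFDerivAt) (W y) (V y)
    refine (hker' y _).mpr ?_
    rw [map_sub, h1, h2, hsymm]
    simp
  have hKZ2 : ∀ (y Z : Q'), Z ∈ D y → ∀ uN vN,
      fderiv ℝ (fun x => Ω' x (σ x uN) (σ x vN)) y Z = 0 := by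
    intro y Z hZ uN vN
    set U1 : Q' → Q' := fun x => σ x uN with hU1def
    set U2 : Q' → Q' := fun x => σ x vN with hU2def
    have hU1sm : ContDiff ℝ (⊤ : ℕ∞) U1 := hσ.clm_apply contDiff_const
    have hU2sm : ContDiff ℝ (⊤ : ℕ∞) U2 := hσ.clm_apply contDiff_const
    set X : Q' → Q' := fun x => Z - σ x (p x Z) with hXdef
    have hXsm : ContDiff ℝ (⊤ : ℕ∞) X := contDiff_const.sub (hσ.clm_apply (hp.clm_apply contDiff_const))
    have hXD : ∀ x, X x ∈ D x := by
      intro x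
      refine (hker' x _).mpr ?_
      rw [hXdef]; simp only [map_sub, hσp]; exact sub_self _
    have hXy : X y = Z := by
      rw [hXdef]; simp only []
      rw [(hker' y Z).mp hZ, map_zero, sub_zero]
    have hXc : ∃ c, ∀ x, p x (X x) = c := ⟨0, fun x => (hker' x _).mp (hXD x)⟩
    have hU1c : ∃ c, ∀ x, p x (U1 x) = c := ⟨uN, fun x => hσp x uN⟩
    have hU2c : ∃ c, ∀ x, p x (U2 x) = c := ⟨vN, fun x => hσp x vN⟩
    have hmain := hmaster2 U1 U2 y ((hU1sm.differentiable (by simp)) y)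
      ((hU2sm.differentiable (by simp)) y) Z
    have hstar : ∀ (w e : Q'), fderiv ℝ (fun z => Ω' z Z w) y e
        = - Ω' y (fderiv ℝ X y e) w := by
      intro w e
      have hzero : (fun x => Ω' x (X x) w) = fun _ => (0 : ℝ) :=
        funext fun x => hΩ'D x (X x) (hXD x) w
      have hfz : fderiv ℝ (fun x => Ω' x (X x) w) y e = 0 := by
        rw [hzero, fderiv_const_apply]; rfl
      have hexp := hmaster2 X (fun _ => w) y ((hXsm.differentiable (by simp)) y)
        (differentiableAt_const w) e
      beta_reduce at hexp
      rw [hXy, hfz, fderiv_fun_const] at hexp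
      simp only [Pi.zero_apply, ContinuousLinearMap.zero_apply] at hexp
      rw [hΩ'D y Z hZ 0] at hexp
      linarith [hexp]
    have hd2e : d2 Ω' y Z (U1 y) (U2 y)
        = fderiv ℝ (fun z => Ω' z (U1 y) (U2 y)) y Z
          - fderiv ℝ (fun z => Ω' z Z (U2 y)) y (U1 y)
          + fderiv ℝ (fun z => Ω' z Z (U1 y)) y (U2 y) := rfl
    have hw : d2 Ω' y Z (U1 y) (U2 y) = 0 := by
      rw [hd2Ω']
      simp only [wedge12]
      rw [hω'D y Z hZ, hΩ'D y Z hZ (U2 y), hΩ'D y Z hZ (U1 y)]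
      ring
    rw [hstar (U2 y) (U1 y), hstar (U1 y) (U2 y), hw] at hd2e
    have hT1 : fderiv ℝ (fun z => Ω' z (U1 y) (U2 y)) y Z
        = - Ω' y (fderiv ℝ X y (U1 y)) (U2 y) + Ω' y (fderiv ℝ X y (U2 y)) (U1 y) := by
      linarith [hd2e]
    have hb1 : fderiv ℝ U1 y Z - fderiv ℝ X y (U1 y) ∈ D y := by
      have h := hbr2 U1 X y hU1sm hXsm hU1c hXc
      rw [hXy] at h
      exact h
    have hb2 : fderiv ℝ U2 y Z - fderiv ℝ X y (U2 y) ∈ D y := by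
      have h := hbr2 U2 X y hU2sm hXsm hU2c hXc
      rw [hXy] at h
      exact h
    have he1 : Ω' y (fderiv ℝ U1 y Z) (U2 y) = Ω' y (fderiv ℝ X y (U1 y)) (U2 y) :=
      hΩ'subst1 y _ _ _ hb1
    have he2 : Ω' y (U1 y) (fderiv ℝ U2 y Z) = Ω' y (U1 y) (fderiv ℝ X y (U2 y)) :=
      hΩ'subst2 y _ _ _ hb2
    have he3 : Ω' y (fderiv ℝ X y (U2 y)) (U1 y) = - Ω' y (U1 y) (fderiv ℝ X y (U2 y)) := by
      rw [hΩ'alt y (U1 y) (fderiv ℝ X y (U2 y))]; ring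
    rw [hmain, hT1]
    linarith [he1, he2, he3]
  have hKZ1 : ∀ (y Z : Q'), Z ∈ D y → ∀ uN,
      fderiv ℝ (fun x => ω' x (σ x uN)) y Z = 0 := by
    intro y Z hZ uN
    set U1 : Q' → Q' := fun x => σ x uN with hU1def
    have hU1sm : ContDiff ℝ (⊤ : ℕ∞) U1 := hσ.clm_apply contDiff_const
    set X : Q' → Q' := fun x => Z - σ x (p x Z) with hXdef
    have hXsm : ContDiff ℝ (⊤ : ℕ∞) X := contDiff_const.sub (hσ.clm_apply (hp.clm_apply contDiff_const))
    have hXD : ∀ x, X x ∈ D x := by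
      intro x
      refine (hker' x _).mpr ?_
      rw [hXdef]; simp only [map_sub, hσp]; exact sub_self _
    have hXy : X y = Z := by
      rw [hXdef]; simp only []
      rw [(hker' y Z).mp hZ, map_zero, sub_zero]
    have hXc : ∃ c, ∀ x, p x (X x) = c := ⟨0, fun x => (hker' x _).mp (hXD x)⟩
    have hU1c : ∃ c, ∀ x, p x (U1 x) = c := ⟨uN, fun x => hσp x uN⟩
    have hmain := hmaster1 U1 y ((hU1sm.differentiable (by simp)) y) Z
    have hstar : ∀ e, fderiv ℝ (fun z => ω' z Z) y e = - ω' y (fderiv ℝ X y e) := by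
      intro e
      have hzero : (fun x => ω' x (X x)) = fun _ => (0 : ℝ) :=
        funext fun x => hω'D x (X x) (hXD x)
      have hfz : fderiv ℝ (fun x => ω' x (X x)) y e = 0 := by
        rw [hzero, fderiv_const_apply]; rfl
      have hexp := hmaster1 X y ((hXsm.differentiable (by simp)) y) e
      beta_reduce at hexp
      rw [hXy, hfz] at hexp
      linarith [hexp]
    have hd1e : d1 ω' y Z (U1 y)
        = fderiv ℝ (fun z => ω' z (U1 y)) y Z - fderiv ℝ (fun z => ω' z Z) y (U1 y) := rfl
    have hw : d1 ω' y Z (U1 y) = 0 := hd1ω' y Z (U1 y)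
    rw [hstar (U1 y), hw] at hd1e
    have hb1 : fderiv ℝ U1 y Z - fderiv ℝ X y (U1 y) ∈ D y := by
      have h := hbr2 U1 X y hU1sm hXsm hU1c hXc
      rw [hXy] at h
      exact h
    have he1 : ω' y (fderiv ℝ U1 y Z) = ω' y (fderiv ℝ X y (U1 y)) :=
      hω'subst y _ _ hb1
    rw [hmain]
    linarith [hd1e, he1]
  -- smoothness of the candidate descended data, upstairs
  have hΦ2sm : ∀ uN vN, ContDiff ℝ (⊤ : ℕ∞) (fun r => Ω' r (σ r uN) (σ r vN)) := fun uN vN =>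
    hr_master2_contDiff Ω' hΩ'sm hΩ'bil (f := fun x : Q' => x) contDiff_id
      (hσ.clm_apply contDiff_const) (hσ.clm_apply contDiff_const)
  have hΦ1sm : ∀ uN, ContDiff ℝ (⊤ : ℕ∞) (fun r => ω' r (σ r uN)) := fun uN =>
    hr_master1_contDiff ω' hω'sm hω'lin (f := fun x : Q' => x) contDiff_id
      (hσ.clm_apply contDiff_const)
  -- global constancy along fibers
  have hFC : ∀ q q' : Q', π q = π q' →
      (∀ uN vN, Ω' q (σ q uN) (σ q vN) = Ω' q' (σ q' uN) (σ q' vN)) ∧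
      (∀ uN, ω' q (σ q uN) = ω' q' (σ q' uN)) := by
    intro q q' hqq
    haveI : PreconnectedSpace ↥(π ⁻¹' {π q}) :=
      Subtype.preconnectedSpace (hfib (π q)).isPreconnected
    set f : ↥(π ⁻¹' {π q}) → ((N → N → ℝ) × (N → ℝ)) := fun s =>
      (fun uN vN => Ω' s.1 (σ s.1 uN) (σ s.1 vN), fun uN => ω' s.1 (σ s.1 uN)) with hfdef
    have hlc : IsLocallyConstant f := by
      rw [IsLocallyConstant.iff_exists_open]
      rintro ⟨a, ha⟩
      obtain ⟨-, hV⟩ := hr_submersion π hπ a (hπsub a)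
      obtain ⟨t, ht, htop, hat⟩ := eventually_nhds_iff.mp hV
      refine ⟨Subtype.val ⁻¹' t, htop.preimage continuous_subtype_val, hat, ?_⟩
      rintro ⟨b, hb⟩ hbt
      have hπb : π b = π a := by
        have h1 : π b = π q := hb
        have h2 : π a = π q := ha
        rw [h1, h2]
      have hGker : ∀ (G : Q' → ℝ), (∀ (y Z : Q'), Z ∈ D y → fderiv ℝ G y Z = 0) →
          (∀ (x Z : Q'), fderiv ℝ π x Z = 0 → fderiv ℝ G x Z = 0) := by
        intro G hG x Z hZ
        exact hG x Z ((hker' x Z).mpr hZ)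
      refine Prod.ext ?_ ?_
      · funext uN vN
        exact ht b hbt (fun r => Ω' r (σ r uN) (σ r vN)) (hΦ2sm uN vN)
          (hGker _ (fun y Z hZ => hKZ2 y Z hZ uN vN)) hπb
      · funext uN
        exact ht b hbt (fun r => ω' r (σ r uN)) (hΦ1sm uN)
          (hGker _ (fun y Z hZ => hKZ1 y Z hZ uN)) hπb
    have hq'mem : q' ∈ π ⁻¹' {π q} := by
      simp [Set.mem_preimage, hqq.symm]
    have := hlc.apply_eq_of_preconnectedSpace ⟨q, rfl⟩ ⟨q', hq'mem⟩
    constructor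
    · intro uN vN
      exact congrFun (congrFun (congrArg Prod.fst this) uN) vN
    · intro uN
      exact congrFun (congrArg Prod.snd this) uN
  -- global section of π (not smooth)
  set sec : N → Q' := fun y => Classical.choose (hπsurj y) with hsecdef
  have hsec : ∀ y, π (sec y) = y := fun y => Classical.choose_spec (hπsurj y)
  set τ : N → N → N → ℝ := fun y uN vN => Ω' (sec y) (σ (sec y) uN) (σ (sec y) vN) with hτdef
  set α : N → N → ℝ := fun y uN => ω' (sec y) (σ (sec y) uN) with hαdef
  -- pointwise descent
  have hdesc2 : ∀ (q u v : Q'), Ω' q (σ q (p q u)) (σ q (p q v)) = Ω' q u v := by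
    intro q u v
    have h1 : σ q (p q u) - u ∈ D q := by
      refine (hker' q _).mpr ?_
      rw [map_sub, hσp, sub_self]
    have h2 : σ q (p q v) - v ∈ D q := by
      refine (hker' q _).mpr ?_
      rw [map_sub, hσp, sub_self]
    rw [hΩ'subst1 q (σ q (p q u)) u _ h1, hΩ'subst2 q u (σ q (p q v)) v h2]
  have hdesc1 : ∀ (q u : Q'), ω' q (σ q (p q u)) = ω' q u := by
    intro q u
    have h1 : σ q (p q u) - u ∈ D q := by
      refine (hker' q _).mpr ?_
      rw [map_sub, hσp, sub_self]
    exact hω'subst q _ _ h1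
  -- descended identities (the two conclusions)
  have hconc2 : ∀ (q u v : Q'), τ (π q) (p q u) (p q v) = Ω' q u v := by
    intro q u v
    have h1 := (hFC (sec (π q)) q (by rw [hsec])).1 (p q u) (p q v)
    calc τ (π q) (p q u) (p q v)
        = Ω' (sec (π q)) (σ (sec (π q)) (p q u)) (σ (sec (π q)) (p q v)) := rfl
      _ = Ω' q (σ q (p q u)) (σ q (p q v)) := h1
      _ = Ω' q u v := hdesc2 q u v
  have hconc1 : ∀ (q u : Q'), α (π q) (p q u) = ω' q u := by
    intro q u
    have h1 := (hFC (sec (π q)) q (by rw [hsec])).2 (p q u)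
    calc α (π q) (p q u)
        = ω' (sec (π q)) (σ (sec (π q)) (p q u)) := rfl
      _ = ω' q (σ q (p q u)) := h1
      _ = ω' q u := hdesc1 q u
  -- smoothness of τ and α
  have hτsm : Smooth2 τ := by
    intro uN vN
    rw [contDiff_iff_contDiffAt]
    intro y0
    obtain ⟨⟨s, hs0, hssm, hsev⟩, -⟩ := hr_submersion π hπ (sec y0) (hπsub _)
    rw [hsec y0] at hs0 hssm hsev
    have heq : (fun y => τ y uN vN) =ᶠ[𝓝 y0]
        fun y => Ω' (s y) (σ (s y) uN) (σ (s y) vN) := by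
      filter_upwards [hsev] with y hy
      exact ((hFC (s y) (sec y) (by rw [hy, hsec y])).1 uN vN).symm
    have hrhs : ContDiffAt ℝ (⊤ : ℕ∞) (fun y => Ω' (s y) (σ (s y) uN) (σ (s y) vN)) y0 :=
      (hΦ2sm uN vN).contDiffAt.comp y0 hssm
    exact hrhs.congr_of_eventuallyEq heq
  have hαsm : Smooth1 α := by
    intro uN
    rw [contDiff_iff_contDiffAt]
    intro y0
    obtain ⟨⟨s, hs0, hssm, hsev⟩, -⟩ := hr_submersion π hπ (sec y0) (hπsub _)
    rw [hsec y0] at hs0 hssm hsev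
    have heq : (fun y => α y uN) =ᶠ[𝓝 y0] fun y => ω' (s y) (σ (s y) uN) := by
      filter_upwards [hsev] with y hy
      exact ((hFC (s y) (sec y) (by rw [hy, hsec y])).2 uN).symm
    have hrhs : ContDiffAt ℝ (⊤ : ℕ∞) (fun y => ω' (s y) (σ (s y) uN)) y0 :=
      (hΦ1sm uN).contDiffAt.comp y0 hssm
    exact hrhs.congr_of_eventuallyEq heq
  have hσp' : ∀ (q : Q') (m : N), fderiv ℝ π q (σ q m) = m := hσp
  -- bilinearity and antisymmetry of τ
  have hτbil : ∀ y, ∃ B : N →ₗ[ℝ] N →ₗ[ℝ] ℝ, ∀ u v, B u v = τ y u v := by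
    intro y
    obtain ⟨B, hB⟩ := hΩ'bil (sec y)
    refine ⟨B.compl₁₂ ((σ (sec y) : N →L[ℝ] Q') : N →ₗ[ℝ] Q')
      ((σ (sec y) : N →L[ℝ] Q') : N →ₗ[ℝ] Q'), fun u v => ?_⟩
    rw [LinearMap.compl₁₂_apply, hB]
    rfl
  have hτalt : ∀ y u v, τ y u v = -τ y v u := fun y u v => hΩ'alt (sec y) _ _
  -- nondegeneracy of τ
  have hτnd : Nondeg2 τ := by
    intro y vN hvN
    have hmem : σ (sec y) vN ∉ D (sec y) := by
      intro hmem
      have h0 := (hker' _ _).mp hmem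
      rw [hσp] at h0
      exact hvN h0
    have h3 : ¬ ∀ w : Q', Ω (ι (sec y)) (fderiv ℝ ι (sec y) (σ (sec y) vN))
        (fderiv ℝ ι (sec y) w) = 0 := fun hall => hmem ((hD _ _).mpr hall)
    push_neg at h3
    obtain ⟨w, hw⟩ := h3
    refine ⟨p (sec y) w, ?_⟩
    have hmemw : σ (sec y) (p (sec y) w) - w ∈ D (sec y) := by
      refine (hker' _ _).mpr ?_
      rw [map_sub, hσp, sub_self]
    have heq : τ y vN (p (sec y) w) = Ω' (sec y) (σ (sec y) vN) w :=
      hΩ'subst2 (sec y) (σ (sec y) vN) (σ (sec y) (p (sec y) w)) w hmemw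
    rw [heq]
    exact hw
  -- linearity of α
  have hαlin : IsLin1 α := by
    intro y
    obtain ⟨l, hl⟩ := hω'lin (sec y)
    refine ⟨l.comp ((σ (sec y) : N →L[ℝ] Q') : N →ₗ[ℝ] Q'), funext fun u => ?_⟩
    show l (σ (sec y) u) = α y u
    rw [congrFun hl (σ (sec y) u)]
  -- closedness of α
  have hpb1 : pb1 π α = ω' := funext fun q' => funext fun u => hconc1 q' u
  have hαcl : Closed1 α := by
    intro y uN vN
    have h1 := hr_d1_pullback α hαsm hαlin hπ (sec y) (σ (sec y) uN) (σ (sec y) vN)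
    rw [hpb1, hsec y, hσp', hσp'] at h1
    rw [← h1]
    exact hd1ω' _ _ _
  -- the lcs equation
  have hpb2 : pb2 π τ = Ω' :=
    funext fun q' => funext fun u => funext fun v => hconc2 q' u v
  have hτlcs : ∀ y uN vN wN, d2 τ y uN vN wN = wedge12 α τ y uN vN wN := by
    intro y uN vN wN
    have h1 := hr_d2_pullback τ hτsm hτbil hτalt hπ (sec y)
      (σ (sec y) uN) (σ (sec y) vN) (σ (sec y) wN)
    rw [hpb2, hsec y, hσp', hσp', hσp'] at h1
    rw [← h1, hd2Ω']
    rfl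
  exact ⟨τ, α, ⟨hτsm, ⟨hτbil, hτalt⟩, hτnd, hαsm, hαlin, hαcl, hτlcs⟩,
    fun q u v => hconc2 q u v, fun q u => hconc1 q u⟩
end

section
/- If X is a smooth section of the characteristic distribution TQ^Ω ∩ TQ of a submanifold Q of a locally conformal symplectic manifold (M, Ω, ω), and ι*ω(Y) = 0 for all sections Y of TQ^Ω ∩ TQ, then the Lie derivative L_X(ι*Ω) = 0, i.e. ι*Ω is invariant along the characteristic foliation. -/
/-- Lie derivative of a 2-form along a vector field, via the standard formula. -/
noncomputable def lieD2 {Q' : Type*} [NormedAddCommGroup Q'] [NormedSpace ℝ Q']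
    (X : Q' → Q') (η : Q' → Q' → Q' → ℝ) : Q' → Q' → Q' → ℝ := fun q u v =>
  fderiv ℝ (fun y => η y u v) q (X q) + η q (fderiv ℝ X q u) v + η q u (fderiv ℝ X q v)


noncomputable section KeyAux
variable {E Q' : Type*} [NormedAddCommGroup E] [NormedSpace ℝ E] [FiniteDimensional ℝ E]
  [NormedAddCommGroup Q'] [NormedSpace ℝ Q']

variable {E Q' : Type*} [NormedAddCommGroup E] [NormedSpace ℝ E] [FiniteDimensional ℝ E]
  [NormedAddCommGroup Q'] [NormedSpace ℝ Q']

/-- coordinate functional -/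
def Cd (i : Fin (Module.finrank ℝ E)) : E →L[ℝ] ℝ :=
  LinearMap.toContinuousLinearMap ((Module.finBasis ℝ E).coord i)

lemma expand2 (Ω : E → E → E → ℝ)
    (hbil : ∀ x, ∃ B : E →ₗ[ℝ] E →ₗ[ℝ] ℝ, ∀ u v, B u v = Ω x u v)
    (x : E) (u v : E) :
    Ω x u v = ∑ i, ∑ j, Cd i u * Cd j v * Ω x (Module.finBasis ℝ E i) (Module.finBasis ℝ E j) := by
  obtain ⟨B, hB⟩ := hbil x
  set b := Module.finBasis ℝ E
  have hu : u = ∑ i, b.repr u i • b i := (b.sum_repr u).symm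
  have hv : v = ∑ j, b.repr v j • b j := (b.sum_repr v).symm
  calc Ω x u v = B u v := (hB u v).symm
    _ = ∑ i, ∑ j, Cd i u * Cd j v * B (b i) (b j) := by
        conv_lhs => rw [hu, hv]
        simp only [map_sum, map_smul, LinearMap.coe_sum, Finset.sum_apply,
          LinearMap.smul_apply, smul_eq_mul, Cd, LinearMap.coe_toContinuousLinearMap',
          Module.Basis.coord_apply]
        simp only [Finset.mul_sum]
        rw [Finset.sum_comm]
        exact Finset.sum_congr rfl fun i _ => Finset.sum_congr rfl fun j _ => by ring
    _ = _ := by simp [hB]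

lemma key (Ω : E → E → E → ℝ) (hs : Smooth2 Ω)
    (hbil : ∀ x, ∃ B : E →ₗ[ℝ] E →ₗ[ℝ] ℝ, ∀ u v, B u v = Ω x u v)
    (ι : Q' → E) (hι : ContDiff ℝ (⊤ : ℕ∞) ι)
    (a c : Q' → E) (ha : ContDiff ℝ (⊤ : ℕ∞) a) (hc : ContDiff ℝ (⊤ : ℕ∞) c)
    (q : Q') (w : Q') :
    fderiv ℝ (fun y => Ω (ι y) (a y) (c y)) q w =
      fderiv ℝ (fun x => Ω x (a q) (c q)) (ι q) (fderiv ℝ ι q w)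
      + Ω (ι q) (fderiv ℝ a q w) (c q) + Ω (ι q) (a q) (fderiv ℝ c q w) := by
  set b := Module.finBasis ℝ E
  -- derivative of each basic function F i j ∘ ι
  have hFd : ∀ i j : Fin (Module.finrank ℝ E), HasFDerivAt (fun y => Ω (ι y) (b i) (b j))
      ((fderiv ℝ (fun x => Ω x (b i) (b j)) (ι q)).comp (fderiv ℝ ι q)) q := by
    intro i j
    exact (((hs (b i) (b j)).differentiable (by simp) (ι q)).hasFDerivAt).comp q
      ((hι.differentiable (by simp) q).hasFDerivAt)
  have haD : HasFDerivAt a (fderiv ℝ a q) q := (ha.differentiable (by simp) q).hasFDerivAt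
  have hcD : HasFDerivAt c (fderiv ℝ c q) q := (hc.differentiable (by simp) q).hasFDerivAt
  have hterm : ∀ i j : Fin (Module.finrank ℝ E),
      HasFDerivAt (fun y => Cd i (a y) * Cd j (c y) * Ω (ι y) (b i) (b j))
      ((Cd i (a q) * Cd j (c q)) • ((fderiv ℝ (fun x => Ω x (b i) (b j)) (ι q)).comp (fderiv ℝ ι q))
       + Ω (ι q) (b i) (b j) •
        ((Cd i (a q)) • ((Cd j (E := E)).comp (fderiv ℝ c q))
          + (Cd j (c q)) • ((Cd i (E := E)).comp (fderiv ℝ a q)))) q := by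
    intro i j
    have h1 : HasFDerivAt (fun y => Cd i (a y)) ((Cd i (E := E)).comp (fderiv ℝ a q)) q :=
      (Cd i).hasFDerivAt.comp q haD
    have h2 : HasFDerivAt (fun y => Cd j (c y)) ((Cd j (E := E)).comp (fderiv ℝ c q)) q :=
      (Cd j).hasFDerivAt.comp q hcD
    exact (h1.mul h2).mul (hFd i j)
  have hsum := HasFDerivAt.fun_sum (u := (Finset.univ : Finset (Fin (Module.finrank ℝ E) × Fin (Module.finrank ℝ E))))
    (A := fun p y => Cd p.1 (a y) * Cd p.2 (c y) * Ω (ι y) (b p.1) (b p.2))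
    (fun p _ => hterm p.1 p.2)
  have heq : (fun y => Ω (ι y) (a y) (c y)) =
      fun y => ∑ p : Fin (Module.finrank ℝ E) × Fin (Module.finrank ℝ E),
        Cd p.1 (a y) * Cd p.2 (c y) * Ω (ι y) (b p.1) (b p.2) := by
    funext y
    rw [expand2 Ω hbil (ι y) (a y) (c y), ← Finset.sum_product']
    rfl
  have hD : fderiv ℝ (fun y => Ω (ι y) (a y) (c y)) q =
      ∑ p : Fin (Module.finrank ℝ E) × Fin (Module.finrank ℝ E),
        ((Cd p.1 (a q) * Cd p.2 (c q)) • ((fderiv ℝ (fun x => Ω x (b p.1) (b p.2)) (ι q)).comp (fderiv ℝ ι q))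
       + Ω (ι q) (b p.1) (b p.2) •
        ((Cd p.1 (a q)) • ((Cd p.2 (E := E)).comp (fderiv ℝ c q))
          + (Cd p.2 (c q)) • ((Cd p.1 (E := E)).comp (fderiv ℝ a q)))) := by
    rw [heq]; exact hsum.fderiv
  have hL : fderiv ℝ (fun x => Ω x (a q) (c q)) (ι q) =
      ∑ p : Fin (Module.finrank ℝ E) × Fin (Module.finrank ℝ E),
        (Cd p.1 (a q) * Cd p.2 (c q)) • fderiv ℝ (fun x => Ω x (b p.1) (b p.2)) (ι q) := by
    have heq2 : (fun x => Ω x (a q) (c q)) =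
        fun x => ∑ p : Fin (Module.finrank ℝ E) × Fin (Module.finrank ℝ E),
          Cd p.1 (a q) * Cd p.2 (c q) * Ω x (b p.1) (b p.2) := by
      funext x
      rw [expand2 Ω hbil x (a q) (c q), ← Finset.sum_product']
      rfl
    rw [heq2]
    exact (HasFDerivAt.fun_sum fun p _ =>
      (((hs (b p.1) (b p.2)).differentiable (by simp) (ι q)).hasFDerivAt).const_mul _).fderiv
  rw [hD, expand2 Ω hbil (ι q) (fderiv ℝ a q w) (c q),
    expand2 Ω hbil (ι q) (a q) (fderiv ℝ c q w), hL]
  rw [← Finset.sum_product', ← Finset.sum_product']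
  simp only [ContinuousLinearMap.sum_apply, ContinuousLinearMap.add_apply,
    ContinuousLinearMap.smul_apply, ContinuousLinearMap.coe_comp', Function.comp_apply,
    smul_eq_mul, ContinuousLinearMap.coe_smul', Pi.smul_apply, Finset.univ_product_univ]
  rw [← Finset.sum_add_distrib, ← Finset.sum_add_distrib]
  exact Finset.sum_congr rfl fun p _ => by ring
end KeyAux

/-- if `ι*ω` annihilates the characteristic distribution, then `ι*Ω` is
invariant along it: `L_X (ι*Ω) = 0` for every section `X`. -/
theorem lie_derivative_pullback_zero
    {E : Type*} [NormedAddCommGroup E] [NormedSpace ℝ E] [FiniteDimensional ℝ E]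
    {n : ℕ} (hdim : Module.finrank ℝ E = 2 * n) (hn : 1 < n)
    (Ω : E → E → E → ℝ) (ω : E → E → ℝ) (hlcs : IsLCS Ω ω)
    {Q' : Type*} [NormedAddCommGroup Q'] [NormedSpace ℝ Q'] [FiniteDimensional ℝ Q']
    (ι : Q' → E) (hι : ContDiff ℝ (⊤ : ℕ∞) ι) (hιinj : Function.Injective ι)
    (hιemb : Topology.IsEmbedding ι)
    (hιimm : ∀ q, Function.Injective (fderiv ℝ ι q))
    (D : Q' → Submodule ℝ Q')
    (hD : ∀ q u, u ∈ D q ↔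
      ∀ w : Q', Ω (ι q) (fderiv ℝ ι q u) (fderiv ℝ ι q w) = 0)
    (X : Q' → Q') (hX : ContDiff ℝ (⊤ : ℕ∞) X) (hXD : ∀ q, X q ∈ D q)
    (hωD : ∀ Y : Q' → Q', ContDiff ℝ (⊤ : ℕ∞) Y → (∀ q, Y q ∈ D q) →
      ∀ q, ω (ι q) (fderiv ℝ ι q (Y q)) = 0) :
    ∀ q u v, lieD2 X (pb2 ι Ω) q u v = 0 := by
  intro q u v
  obtain ⟨hs, ⟨hbil, hanti⟩, -, -, -, -, hd2w⟩ := hlcs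
  have hωX : ∀ q, ω (ι q) (fderiv ℝ ι q (X q)) = 0 := hωD X hX hXD
  have hd2 : ∀ x u v w : E,
      fderiv ℝ (fun y => Ω y v w) x u - fderiv ℝ (fun y => Ω y u w) x v +
        fderiv ℝ (fun y => Ω y u v) x w =
      ω x u * Ω x v w - ω x v * Ω x u w + ω x w * Ω x u v := hd2w
  simp only [lieD2, pb2]

  have hdι : ContDiff ℝ (⊤ : ℕ∞) (fderiv ℝ ι) := hι.fderiv_right (by simp)
  have haA : ∀ z : Q', ContDiff ℝ (⊤ : ℕ∞) (fun y => fderiv ℝ ι y z) := fun z =>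
    hdι.clm_apply contDiff_const
  have haX : ContDiff ℝ (⊤ : ℕ∞) (fun y => fderiv ℝ ι y (X y)) := hdι.clm_apply hX
  have hHz : ∀ (z w : Q'), fderiv ℝ (fun y => fderiv ℝ ι y z) q w =
      fderiv ℝ (fderiv ℝ ι) q w z := by
    intro z w
    rw [fderiv_clm_apply (hdι.differentiable (by simp) q) (differentiableAt_const z)]
    simp
  have hHX : ∀ w : Q', fderiv ℝ (fun y => fderiv ℝ ι y (X y)) q w =
      fderiv ℝ (fderiv ℝ ι) q w (X q) + fderiv ℝ ι q (fderiv ℝ X q w) := by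
    intro w
    rw [fderiv_clm_apply (hdι.differentiable (by simp) q) (hX.differentiable (by simp) q)]
    simp [add_comm]
  have hsym : ∀ w z : Q', fderiv ℝ (fderiv ℝ ι) q w z = fderiv ℝ (fderiv ℝ ι) q z w :=
    fun w z => hι.contDiffAt.isSymmSndFDerivAt (by rw [minSmoothness_of_isRCLikeNormedField]; exact WithTop.coe_le_coe.mpr le_top) w z
  have hzero : ∀ y z, Ω (ι y) (fderiv ℝ ι y (X y)) (fderiv ℝ ι y z) = 0 := fun y z =>
    (hD y (X y)).mp (hXD y) z
  -- additivity of Ω at ι q in the first slot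
  have hadd : ∀ r s t : E, Ω (ι q) (r + s) t = Ω (ι q) r t + Ω (ι q) s t := by
    intro r s t
    obtain ⟨B, hB⟩ := hbil (ι q)
    rw [← hB, ← hB, ← hB, map_add, LinearMap.add_apply]
  have K1 := key Ω hs hbil ι hι (fun y => fderiv ℝ ι y u) (fun y => fderiv ℝ ι y v)
    (haA u) (haA v) q (X q)
  have K2 := key Ω hs hbil ι hι (fun y => fderiv ℝ ι y (X y)) (fun y => fderiv ℝ ι y v)
    haX (haA v) q u
  have K3 := key Ω hs hbil ι hι (fun y => fderiv ℝ ι y (X y)) (fun y => fderiv ℝ ι y u)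
    haX (haA u) q v
  rw [show (fun y => Ω (ι y) (fderiv ℝ ι y (X y)) (fderiv ℝ ι y v)) = (fun _ : Q' => (0:ℝ))
    from funext fun y => hzero y v, fderiv_fun_const] at K2
  rw [show (fun y => Ω (ι y) (fderiv ℝ ι y (X y)) (fderiv ℝ ι y u)) = (fun _ : Q' => (0:ℝ))
    from funext fun y => hzero y u, fderiv_fun_const] at K3
  simp only [Pi.zero_apply, ContinuousLinearMap.zero_apply, hHz, hHX, hadd] at K1 K2 K3
  rw [K1]
  have W := hd2 (ι q) (fderiv ℝ ι q (X q)) (fderiv ℝ ι q u) (fderiv ℝ ι q v)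
  rw [hωX q, hzero q v, hzero q u] at W
  simp only [zero_mul, mul_zero, sub_zero, add_zero, zero_sub, zero_add] at W
  -- antisymmetry instances needed
  have a1 := hanti (ι q) (fderiv ℝ ι q u) (fderiv ℝ ι q (fderiv ℝ X q v))
  have a2 := hanti (ι q) (fderiv ℝ ι q u) (fderiv ℝ (fderiv ℝ ι) q (X q) v)
  have s1 := hsym u (X q)
  have s2 := hsym v (X q)
  have s3 := hsym u v
  rw [s1] at K2
  rw [s2] at K3
  rw [← s3] at K3
  linarith [K1, K2, K3, W, a1, a2]
end

section
/- Let Q be a submanifold of M and Ω, Ω' two locally conformal symplectic forms on M with Lee forms ω, ω', conformally equivalent on Q: ι*Ω = f·ι*Ω' with f > 0 smooth on Q. Let F be the (common) characteristic foliation of ker ι*Ω, assumed of constant rank less than dim Q. Then for every vector v tangent to F, ι*ω(v) − ι*ω'(v) − d(ln f)(v) = 0; consequently [ι*ω] = [ι*ω'] in the tangential cohomology H^1(F). -/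
section AuxLCS

lemma pack_bilin {E : Type*} [NormedAddCommGroup E] [NormedSpace ℝ E] [FiniteDimensional ℝ E]
    (Ω : E → E → E → ℝ) (hs : Smooth2 Ω)
    (hb : ∀ x, ∃ B : E →ₗ[ℝ] E →ₗ[ℝ] ℝ, ∀ u v, B u v = Ω x u v) :
    ∃ 𝔅 : E → (E →L[ℝ] E →L[ℝ] ℝ), ContDiff ℝ (⊤ : ℕ∞) 𝔅 ∧ ∀ x u v, 𝔅 x u v = Ω x u v := by
  classical
  set b := Module.finBasis ℝ E with hbdef
  set cL : Fin (Module.finrank ℝ E) → (E →L[ℝ] ℝ) :=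
    fun i => LinearMap.toContinuousLinearMap (b.coord i) with hcL
  refine ⟨fun x => ∑ i, ∑ j, Ω x (b i) (b j) • ((cL i).smulRight (cL j)), ?_, ?_⟩
  · apply ContDiff.sum; intro i _; apply ContDiff.sum; intro j _
    haveI : IsBoundedSMul ℝ (E →L[ℝ] E →L[ℝ] ℝ) := NormedSpace.toIsBoundedSMul (𝕜 := ℝ) (E := E →L[ℝ] E →L[ℝ] ℝ)
    exact (hs (b i) (b j)).smul contDiff_const
  · intro x u v
    obtain ⟨B, hB⟩ := hb x
    have hu : u = ∑ i, b.repr u i • b i := (b.sum_repr u).symm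
    have hv : v = ∑ j, b.repr v j • b j := (b.sum_repr v).symm
    have key : Ω x u v = ∑ i, ∑ j, b.repr u i * b.repr v j * Ω x (b i) (b j) := by
      rw [← hB]
      conv_lhs => rw [hu, hv]
      rw [map_sum]
      simp only [map_smul, LinearMap.sum_apply, LinearMap.smul_apply, map_sum, smul_eq_mul,
        Finset.mul_sum]
      rw [Finset.sum_comm]
      apply Finset.sum_congr rfl; intro i _
      apply Finset.sum_congr rfl; intro j _
      rw [hB]; ring
    rw [key]
    simp only [ContinuousLinearMap.sum_apply, ContinuousLinearMap.smul_apply,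
      ContinuousLinearMap.smulRight_apply, smul_eq_mul]
    apply Finset.sum_congr rfl; intro i _
    apply Finset.sum_congr rfl; intro j _
    simp only [hcL, LinearMap.coe_toContinuousLinearMap', Module.Basis.coord_apply]
    ring

lemma pull_fderiv {Q' E : Type*} [NormedAddCommGroup E] [NormedSpace ℝ E]
    [NormedAddCommGroup Q'] [NormedSpace ℝ Q']
    (𝔅 : E → (E →L[ℝ] E →L[ℝ] ℝ)) (h𝔅 : ContDiff ℝ (⊤ : ℕ∞) 𝔅)
    (ι : Q' → E) (hι : ContDiff ℝ (⊤ : ℕ∞) ι) (q : Q') (v w : Q') :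
    DifferentiableAt ℝ (fun q => 𝔅 (ι q) (fderiv ℝ ι q v) (fderiv ℝ ι q w)) q ∧
    ∀ u, fderiv ℝ (fun q => 𝔅 (ι q) (fderiv ℝ ι q v) (fderiv ℝ ι q w)) q u =
      fderiv ℝ 𝔅 (ι q) (fderiv ℝ ι q u) (fderiv ℝ ι q v) (fderiv ℝ ι q w) +
      𝔅 (ι q) (fderiv ℝ (fderiv ℝ ι) q u v) (fderiv ℝ ι q w) +
      𝔅 (ι q) (fderiv ℝ ι q v) (fderiv ℝ (fderiv ℝ ι) q u w) := by
  set A := fderiv ℝ ι with hAdef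
  have hA : ContDiff ℝ (⊤ : ℕ∞) A := hι.fderiv_right (by simp)
  have hAq : HasFDerivAt A (fderiv ℝ A q) q := (hA.differentiable (by simp) q).hasFDerivAt
  have h1 : HasFDerivAt ι (A q) q := (hι.differentiable (by simp) q).hasFDerivAt
  have hBι : HasFDerivAt (fun q => 𝔅 (ι q)) ((fderiv ℝ 𝔅 (ι q)).comp (A q)) q :=
    HasFDerivAt.comp q ((h𝔅.differentiable (by simp) (ι q)).hasFDerivAt) h1
  have huv : HasFDerivAt (fun q => A q v) ((A q).comp 0 + (fderiv ℝ A q).flip v) q :=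
    hAq.clm_apply (hasFDerivAt_const v q)
  have huw : HasFDerivAt (fun q => A q w) ((A q).comp 0 + (fderiv ℝ A q).flip w) q :=
    hAq.clm_apply (hasFDerivAt_const w q)
  have hg := (hBι.clm_apply huv).clm_apply huw
  refine ⟨hg.differentiableAt, fun u => ?_⟩
  rw [hg.fderiv]
  simp [ContinuousLinearMap.add_apply, ContinuousLinearMap.comp_apply,
    ContinuousLinearMap.flip_apply, ContinuousLinearMap.zero_apply]
  ring

lemma ev_fderiv {E : Type*} [NormedAddCommGroup E] [NormedSpace ℝ E]
    (Ω : E → E → E → ℝ) (𝔅 : E → (E →L[ℝ] E →L[ℝ] ℝ)) (h𝔅 : ContDiff ℝ (⊤ : ℕ∞) 𝔅)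
    (heq : ∀ x u v, 𝔅 x u v = Ω x u v) (x : E) (a c e : E) :
    fderiv ℝ (fun y => Ω y a c) x e = fderiv ℝ 𝔅 x e a c := by
  have hfun : (fun y => Ω y a c) =
      fun y => (((ContinuousLinearMap.apply ℝ ℝ c).comp
        (ContinuousLinearMap.apply ℝ (E →L[ℝ] ℝ) a)) (𝔅 y)) := by
    funext y; simp [heq]
  rw [hfun]
  have := (((ContinuousLinearMap.apply ℝ ℝ c).comp
      (ContinuousLinearMap.apply ℝ (E →L[ℝ] ℝ) a)).hasFDerivAt.comp x
      ((h𝔅.differentiable (by simp) x).hasFDerivAt)).fderiv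
  rw [show (fun y => (((ContinuousLinearMap.apply ℝ ℝ) c).comp ((ContinuousLinearMap.apply ℝ (E →L[ℝ] ℝ)) a)) (𝔅 y)) = (⇑(((ContinuousLinearMap.apply ℝ ℝ) c).comp ((ContinuousLinearMap.apply ℝ (E →L[ℝ] ℝ)) a)) ∘ 𝔅) from rfl, this]
  simp

lemma d2_pull {Q' E : Type*} [NormedAddCommGroup E] [NormedSpace ℝ E]
    [NormedAddCommGroup Q'] [NormedSpace ℝ Q']
    (Ω : E → E → E → ℝ) (𝔅 : E → (E →L[ℝ] E →L[ℝ] ℝ)) (h𝔅 : ContDiff ℝ (⊤ : ℕ∞) 𝔅)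
    (heq : ∀ x u v, 𝔅 x u v = Ω x u v)
    (halt : ∀ x u v, Ω x u v = -Ω x v u)
    (ι : Q' → E) (hι : ContDiff ℝ (⊤ : ℕ∞) ι) (q u v w : Q') :
    d2 (fun y a b => Ω (ι y) (fderiv ℝ ι y a) (fderiv ℝ ι y b)) q u v w =
      d2 Ω (ι q) (fderiv ℝ ι q u) (fderiv ℝ ι q v) (fderiv ℝ ι q w) := by
  set A := fderiv ℝ ι with hAdef
  have hA : ContDiff ℝ (⊤ : ℕ∞) A := hι.fderiv_right (by simp)
  have hrw : ∀ a b : Q', (fun y => Ω (ι y) (A y a) (A y b)) =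
      fun y => 𝔅 (ι y) (A y a) (A y b) := fun a b => funext fun y => (heq _ _ _).symm
  have hsym : ∀ a b : Q', fderiv ℝ A q a b = fderiv ℝ A q b a := by
    intro a b
    exact second_derivative_symmetric (fun y => (hι.differentiable (by simp) y).hasFDerivAt)
      ((hA.differentiable (by simp) q).hasFDerivAt) a b
  have hBalt : ∀ x a b, 𝔅 x a b = -𝔅 x b a := by
    intro x a b; rw [heq, heq]; exact halt x a b
  have e1 := (pull_fderiv 𝔅 h𝔅 ι hι q v w).2 u
  have e2 := (pull_fderiv 𝔅 h𝔅 ι hι q u w).2 v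
  have e3 := (pull_fderiv 𝔅 h𝔅 ι hι q u v).2 w
  have d1 := ev_fderiv Ω 𝔅 h𝔅 heq (ι q) (A q v) (A q w) (A q u)
  have dd2 := ev_fderiv Ω 𝔅 h𝔅 heq (ι q) (A q u) (A q w) (A q v)
  have d3 := ev_fderiv Ω 𝔅 h𝔅 heq (ι q) (A q u) (A q v) (A q w)
  simp only [d2, hrw, ← hAdef]
  rw [e1, e2, e3, d1, dd2, d3]
  have s1 := hsym v u
  have s2 := hsym w u
  have s3 := hsym w v
  have a1 := hBalt (ι q) (A q v) (fderiv ℝ A q u w)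
  rw [s1, s2, s3, a1]
  ring

lemma d2_smul {Q' : Type*} [NormedAddCommGroup Q'] [NormedSpace ℝ Q']
    (f : Q' → ℝ) (hf : ContDiff ℝ (⊤ : ℕ∞) f) (P : Q' → Q' → Q' → ℝ)
    (hP : ∀ q a b, DifferentiableAt ℝ (fun y => P y a b) q) (q u v w : Q') :
    d2 (fun y a b => f y * P y a b) q u v w =
      fderiv ℝ f q u * P q v w - fderiv ℝ f q v * P q u w + fderiv ℝ f q w * P q u v
        + f q * d2 P q u v w := by
  have hfd : DifferentiableAt ℝ f q := hf.differentiable (by simp) q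
  have m1 := fderiv_fun_mul hfd (hP q v w)
  have m2 := fderiv_fun_mul hfd (hP q u w)
  have m3 := fderiv_fun_mul hfd (hP q u v)
  simp only [d2, m1, m2, m3, ContinuousLinearMap.add_apply, ContinuousLinearMap.smul_apply,
    smul_eq_mul]
  ring

end AuxLCS

/-- for conformally equivalent locally conformal symplectic forms on `Q`,
the Lee forms differ along the characteristic foliation by `d(ln f)`; consequently
`[ι*ω] = [ι*ω']` in the tangential cohomology `H¹(F)`. -/
theorem lee_forms_cohomologous_on_Q
    {E : Type*} [NormedAddCommGroup E] [NormedSpace ℝ E] [FiniteDimensional ℝ E]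
    {n : ℕ} (hdim : Module.finrank ℝ E = 2 * n) (hn : 1 < n)
    (Ω Ω' : E → E → E → ℝ) (ω ω' : E → E → ℝ)
    (hlcs : IsLCS Ω ω) (hlcs' : IsLCS Ω' ω')
    {Q' : Type*} [NormedAddCommGroup Q'] [NormedSpace ℝ Q'] [FiniteDimensional ℝ Q']
    (ι : Q' → E) (hι : ContDiff ℝ (⊤ : ℕ∞) ι) (hιinj : Function.Injective ι)
    (hιemb : Topology.IsEmbedding ι)
    (hιimm : ∀ q, Function.Injective (fderiv ℝ ι q))
    -- conformal equivalence on `Q`: `ι*Ω = f · ι*Ω'`: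
    (f : Q' → ℝ) (hf : ContDiff ℝ (⊤ : ℕ∞) f) (hfpos : ∀ q, 0 < f q)
    (hconf : ∀ q u v, Ω (ι q) (fderiv ℝ ι q u) (fderiv ℝ ι q v) =
      f q * Ω' (ι q) (fderiv ℝ ι q u) (fderiv ℝ ι q v))
    -- the (common) characteristic distribution `D = ker ι*Ω`, of constant rank `< dim Q`:
    (D : Q' → Submodule ℝ Q')
    (hD : ∀ q u, u ∈ D q ↔
      ∀ w : Q', Ω (ι q) (fderiv ℝ ι q u) (fderiv ℝ ι q w) = 0)
    {k : ℕ} (hconst : ∀ q, Module.finrank ℝ (D q) = k)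
    (hk : k < Module.finrank ℝ Q') :
    (∀ q, ∀ v ∈ D q,
      ω (ι q) (fderiv ℝ ι q v) - ω' (ι q) (fderiv ℝ ι q v) -
        fderiv ℝ (fun y => Real.log (f y)) q v = 0) ∧
    (fun q (v : Fin 1 → Q') =>
        ω (ι q) (fderiv ℝ ι q (v 0)) - ω' (ι q) (fderiv ℝ ι q (v 0))) ∈ Bsub D 1 := by
  classical
  obtain ⟨hsΩ, hbaΩ, hndΩ, hsω, hlω, hcω, hd2Ω⟩ := hlcs
  obtain ⟨hsΩ', hbaΩ', hndΩ', hsω', hlω', hcω', hd2Ω'⟩ := hlcs'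
  obtain ⟨𝔅, h𝔅, heq⟩ := pack_bilin Ω hsΩ hbaΩ.1
  obtain ⟨𝔅', h𝔅', heq'⟩ := pack_bilin Ω' hsΩ' hbaΩ'.1
  set A := fderiv ℝ ι with hAdef
  have hfne : ∀ q, f q ≠ 0 := fun q => ne_of_gt (hfpos q)
  have hPdiff : ∀ (q a b : Q'), DifferentiableAt ℝ (fun y => Ω' (ι y) (A y a) (A y b)) q := by
    intro q a b
    have hfun : (fun y => Ω' (ι y) (A y a) (A y b)) = fun y => 𝔅' (ι y) (A y a) (A y b) :=
      funext fun y => (heq' _ _ _).symm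
    rw [hfun]
    exact (pull_fderiv 𝔅' h𝔅' ι hι q a b).1
  have hlog : ∀ (q : Q') (v : Q'), fderiv ℝ (fun y => Real.log (f y)) q v =
      (f q)⁻¹ * fderiv ℝ f q v := by
    intro q v
    have hfd : HasFDerivAt f (fderiv ℝ f q) q := (hf.differentiable (by simp) q).hasFDerivAt
    have h := ((Real.hasDerivAt_log (hfne q)).comp_hasFDerivAt q hfd).fderiv
    rw [show (fun y => Real.log (f y)) = Real.log ∘ f from rfl, h]; simp
  have star : ∀ q u v w : Q',
      (f q * ω (ι q) (A q u) - fderiv ℝ f q u - f q * ω' (ι q) (A q u)) *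
          Ω' (ι q) (A q v) (A q w)
      - (f q * ω (ι q) (A q v) - fderiv ℝ f q v - f q * ω' (ι q) (A q v)) *
          Ω' (ι q) (A q u) (A q w)
      + (f q * ω (ι q) (A q w) - fderiv ℝ f q w - f q * ω' (ι q) (A q w)) *
          Ω' (ι q) (A q u) (A q v) = 0 := by
    intro q u v w
    have L1 : d2 (fun y a b => Ω (ι y) (A y a) (A y b)) q u v w =
        d2 Ω (ι q) (A q u) (A q v) (A q w) := d2_pull Ω 𝔅 h𝔅 heq hbaΩ.2 ι hι q u v w
    have L2 : d2 (fun y a b => Ω' (ι y) (A y a) (A y b)) q u v w =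
        d2 Ω' (ι q) (A q u) (A q v) (A q w) := d2_pull Ω' 𝔅' h𝔅' heq' hbaΩ'.2 ι hι q u v w
    have Efun : (fun y a b => Ω (ι y) (A y a) (A y b)) =
        fun y a b => f y * Ω' (ι y) (A y a) (A y b) :=
      funext fun y => funext fun a => funext fun b => hconf y a b
    have L3 := d2_smul f hf (fun y a b => Ω' (ι y) (A y a) (A y b)) hPdiff q u v w
    have LHS1 : d2 (fun y a b => f y * Ω' (ι y) (A y a) (A y b)) q u v w =
        wedge12 ω Ω (ι q) (A q u) (A q v) (A q w) := by
      rw [← Efun, L1]; exact hd2Ω _ _ _ _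
    rw [L2, hd2Ω'] at L3
    have hcomb := LHS1.symm.trans L3
    simp only [wedge12] at hcomb
    rw [hconf q v w, hconf q u w, hconf q u v] at hcomb
    linear_combination hcomb
  have part1 : ∀ q, ∀ v ∈ D q,
      ω (ι q) (A q v) - ω' (ι q) (A q v) -
        fderiv ℝ (fun y => Real.log (f y)) q v = 0 := by
    intro q v hv
    have hΩ'v : ∀ b, Ω' (ι q) (A q v) (A q b) = 0 := by
      intro b
      have h0 := (hD q v).1 hv b
      have h1 := hconf q v b
      rw [h0] at h1
      exact ((mul_eq_zero.1 h1.symm).resolve_left (hfne q))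
    have hDne : ∃ u0, u0 ∉ D q := by
      by_contra h
      push_neg at h
      have htop : D q = ⊤ := Submodule.eq_top_iff'.2 h
      have hkq := hconst q
      rw [htop, finrank_top] at hkq
      omega
    obtain ⟨u0, hu0⟩ := hDne
    have hw : ∃ w0, Ω (ι q) (A q u0) (A q w0) ≠ 0 := by
      by_contra h
      push_neg at h
      exact hu0 ((hD q u0).2 h)
    obtain ⟨w0, hw0⟩ := hw
    have hΩ'uw : Ω' (ι q) (A q u0) (A q w0) ≠ 0 := by
      intro h0
      exact hw0 (by rw [hconf q u0 w0, h0, mul_zero])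
    have hstar := star q v u0 w0
    rw [hΩ'v w0, hΩ'v u0] at hstar
    have hc : f q * ω (ι q) (A q v) - fderiv ℝ f q v - f q * ω' (ι q) (A q v) = 0 := by
      have h2 : (f q * ω (ι q) (A q v) - fderiv ℝ f q v - f q * ω' (ι q) (A q v)) *
          Ω' (ι q) (A q u0) (A q w0) = 0 := by linear_combination hstar
      exact (mul_eq_zero.1 h2).resolve_right hΩ'uw
    rw [hlog q v]
    have hf0 := hfne q
    field_simp
    linear_combination hc
  refine ⟨part1, ?_⟩
  set α : DForm Q' 0 := fun x (_ : Fin 0 → Q') => Real.log (f x) with hα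
  have hαsmooth : SmoothForm α := by
    constructor
    · intro v
      exact hf.log (fun x => hfne x)
    · intro x
      refine ⟨AlternatingMap.constOfIsEmpty ℝ Q' (Fin 0) (Real.log (f x)), ?_⟩
      funext v
      simp [hα]
  have hδ : (fun (x : Q') (v : Fin 1 → Q') => extD α x fun i => v (Fin.cast rfl i)) ∈
      Bsub D 1 :=
    AddSubgroup.subset_closure (by
      right
      exact ⟨0, rfl, α, hαsmooth, rfl⟩)
  have hθ : (fun (q : Q') (v : Fin 1 → Q') =>
      ω (ι q) (A q (v 0)) - ω' (ι q) (A q (v 0)) -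
        fderiv ℝ (fun y => Real.log (f y)) q (v 0)) ∈ Bsub D 1 :=
    AddSubgroup.subset_closure (by
      left
      exact fun q v hv => part1 q (v 0) (hv 0))
  have hext : ∀ (q : Q') (v : Fin 1 → Q'),
      extD α q (fun i => v (Fin.cast rfl i)) =
        fderiv ℝ (fun y => Real.log (f y)) q (v 0) := by
    intro q v
    simp [extD, hα, Fin.sum_univ_one]
  have hsum : (fun q (v : Fin 1 → Q') =>
        ω (ι q) (A q (v 0)) - ω' (ι q) (A q (v 0))) =
      (fun (q : Q') (v : Fin 1 → Q') =>
        ω (ι q) (A q (v 0)) - ω' (ι q) (A q (v 0)) -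
          fderiv ℝ (fun y => Real.log (f y)) q (v 0)) +
      (fun (x : Q') (v : Fin 1 → Q') => extD α x fun i => v (Fin.cast rfl i)) := by
    funext q v
    simp only [Pi.add_apply]
    rw [hext q v]
    ring
  rw [hsum]
  exact AddSubgroup.add_mem _ hθ hδ
end

section
/- Let Q be a submanifold of a locally conformal symplectic manifold (M, Ω, ω) with characteristic foliation F of TQ^Ω ∩ TQ of constant rank, N = Q/F a manifold of dimension > 2, π : Q → N a submersion. If there exist a locally conformal symplectic form τ on N and a smooth positive function f on Q with π*τ = f·ι*Ω, then ι*ω(v) + d(ln f)(v) = 0 for every vector v tangent to F; in particular [ι*ω] = 0 in H^1(F). -/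
section AuxReduction

variable {Q : Type*} [NormedAddCommGroup Q] [NormedSpace ℝ Q]
variable {G : Type*} [NormedAddCommGroup G] [NormedSpace ℝ G]

lemma exists_hat [FiniteDimensional ℝ G] (T : G → G → G → ℝ)
    (hTs : ∀ a b, ContDiff ℝ (⊤ : ℕ∞) fun x => T x a b)
    (hTb : ∀ x, ∃ B : G →ₗ[ℝ] G →ₗ[ℝ] ℝ, ∀ u v, B u v = T x u v) :
    ∃ Φ : G → (G →L[ℝ] G →L[ℝ] ℝ), ContDiff ℝ (⊤ : ℕ∞) Φ ∧ ∀ x u v, Φ x u v = T x u v := by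
  classical
  set b := Module.finBasis ℝ G with hb
  set cL : Fin (Module.finrank ℝ G) → (G →L[ℝ] ℝ) :=
    fun i => LinearMap.toContinuousLinearMap (b.coord i) with hcL
  refine ⟨fun x => ∑ i, ∑ j, T x (b i) (b j) • ((cL i).smulRight (cL j)), ?_, ?_⟩
  · apply ContDiff.sum; intro i _
    apply ContDiff.sum; intro j _
    haveI : IsBoundedSMul ℝ (G →L[ℝ] G →L[ℝ] ℝ) := ContinuousLinearMap.toNormedSpace.toIsBoundedSMul
    exact (hTs _ _).smul contDiff_const
  · intro x u v
    obtain ⟨B, hB⟩ := hTb x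
    have hu : (∑ i, b.repr u i • b i) = u := b.sum_repr u
    have hv : (∑ j, b.repr v j • b j) = v := b.sum_repr v
    have hR : T x u v = ∑ i, ∑ j, (b.repr u i * b.repr v j) * T x (b i) (b j) := by
      conv_lhs => rw [← hB u v, ← hu, ← hv]
      simp only [map_sum, map_smul, LinearMap.sum_apply, LinearMap.smul_apply, smul_eq_mul, hB]
      rw [Finset.sum_comm]
      refine Finset.sum_congr rfl fun i _ => by
        rw [Finset.mul_sum]; exact Finset.sum_congr rfl fun j _ => by ring
    rw [hR]
    simp only [ContinuousLinearMap.sum_apply, ContinuousLinearMap.smul_apply,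
      ContinuousLinearMap.smulRight_apply, LinearMap.coe_toContinuousLinearMap',
      Module.Basis.coord_apply, smul_eq_mul, hcL]
    refine Finset.sum_congr rfl fun i _ => Finset.sum_congr rfl fun j _ => by ring

lemma fderiv_hat_apply (Φ : G → (G →L[ℝ] G →L[ℝ] ℝ)) (hΦ : ContDiff ℝ (⊤ : ℕ∞) Φ)
    (x : G) (a b c : G) :
    fderiv ℝ (fun z => Φ z a b) x c = fderiv ℝ Φ x c a b := by
  have hΦd : HasFDerivAt Φ (fderiv ℝ Φ x) x :=
    (hΦ.differentiable (by simp) x).hasFDerivAt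
  have h0 := hΦd.clm_apply (hasFDerivAt_const a x)
  have h1 := h0.clm_apply (hasFDerivAt_const b x)
  rw [h1.fderiv]
  simp

lemma hat_hasFDerivAt (Φ : G → (G →L[ℝ] G →L[ℝ] ℝ)) (hΦ : ContDiff ℝ (⊤ : ℕ∞) Φ)
    {g A B : Q → G} {g' A' B' : Q →L[ℝ] G} {q : Q}
    (hg : HasFDerivAt g g' q) (hA : HasFDerivAt A A' q) (hB : HasFDerivAt B B' q) :
    ∃ L : Q →L[ℝ] ℝ, HasFDerivAt (fun y => Φ (g y) (A y) (B y)) L q ∧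
      ∀ c, L c = fderiv ℝ Φ (g q) (g' c) (A q) (B q)
        + Φ (g q) (A' c) (B q) + Φ (g q) (A q) (B' c) := by
  have hΦd : HasFDerivAt Φ (fderiv ℝ Φ (g q)) (g q) :=
    (hΦ.differentiable (by simp) (g q)).hasFDerivAt
  have h1 : HasFDerivAt (fun y => Φ (g y)) ((fderiv ℝ Φ (g q)).comp g') q :=
    HasFDerivAt.comp (g := Φ) q hΦd hg
  have h2 := h1.clm_apply hA
  have h3 := h2.clm_apply hB
  refine ⟨_, h3, fun c => ?_⟩
  simp only [ContinuousLinearMap.add_apply, ContinuousLinearMap.comp_apply,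
    ContinuousLinearMap.flip_apply, ContinuousLinearMap.coe_comp', Function.comp_apply]
  ring

end AuxReduction

set_option maxHeartbeats 2000000 in
/-- necessity in the reduction of locally conformal symplectic
*structures*: if `π*τ = f · ι*Ω` for some locally conformal symplectic form `τ` on `N`
and positive `f`, then `ι*ω + d(ln f)` vanishes along the characteristic foliation; in
particular `[ι*ω] = 0` in `H¹(F)`. -/
theorem lcs_structure_reduction_necessary
    {E : Type*} [NormedAddCommGroup E] [NormedSpace ℝ E] [FiniteDimensional ℝ E]
    {n : ℕ} (hdim : Module.finrank ℝ E = 2 * n) (hn : 1 < n)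
    (Ω : E → E → E → ℝ) (ω : E → E → ℝ) (hlcs : IsLCS Ω ω)
    {Q' : Type*} [NormedAddCommGroup Q'] [NormedSpace ℝ Q'] [FiniteDimensional ℝ Q']
    (ι : Q' → E) (hι : ContDiff ℝ (⊤ : ℕ∞) ι) (hιinj : Function.Injective ι)
    (hιemb : Topology.IsEmbedding ι)
    (hιimm : ∀ q, Function.Injective (fderiv ℝ ι q))
    -- the characteristic distribution `D = TQ^Ω ∩ TQ = ker ι*Ω` (in `Q'`-coordinates):
    (D : Q' → Submodule ℝ Q')
    (hD : ∀ q u, u ∈ D q ↔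
      ∀ w : Q', Ω (ι q) (fderiv ℝ ι q u) (fderiv ℝ ι q w) = 0)
    {k : ℕ} (hconst : ∀ q, Module.finrank ℝ (D q) = k)
    -- `N = Q/F`, a smooth manifold of dimension `> 2`, with the canonical projection
    -- `π : Q → N`, a submersion whose connected fibers are the leaves of `F`,
    -- `ker π_* = TQ^Ω ∩ TQ`:
    {N : Type*} [NormedAddCommGroup N] [NormedSpace ℝ N] [FiniteDimensional ℝ N]
    (hN : 2 < Module.finrank ℝ N)
    (π : Q' → N) (hπ : ContDiff ℝ (⊤ : ℕ∞) π) (hπsurj : Function.Surjective π)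
    (hπsub : ∀ q, Function.Surjective (fderiv ℝ π q))
    (hker : ∀ q, LinearMap.ker ((fderiv ℝ π q : Q' →L[ℝ] N) : Q' →ₗ[ℝ] N) = D q)
    (hfib : ∀ y : N, IsConnected (π ⁻¹' {y}))
    (τ : N → N → N → ℝ) (ατ : N → N → ℝ) (hτ : IsLCS τ ατ)
    (f : Q' → ℝ) (hf : ContDiff ℝ (⊤ : ℕ∞) f) (hfpos : ∀ q, 0 < f q)
    (hπτ : ∀ q u v, τ (π q) (fderiv ℝ π q u) (fderiv ℝ π q v) =
      f q * Ω (ι q) (fderiv ℝ ι q u) (fderiv ℝ ι q v)) :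
    (∀ q, ∀ v ∈ D q,
      ω (ι q) (fderiv ℝ ι q v) + fderiv ℝ (fun y => Real.log (f y)) q v = 0) ∧
    (fun q (v : Fin 1 → Q') => ω (ι q) (fderiv ℝ ι q (v 0))) ∈ Bsub D 1 := by
  obtain ⟨hΩs, hΩbil, hΩnd, hωs, hωl, hωcl, hΩd2⟩ := hlcs
  obtain ⟨hτs, hτbil, hτnd, -, -, -, -⟩ := hτ
  obtain ⟨Φτ, hΦτs, hΦτe⟩ := exists_hat τ hτs hτbil.1
  obtain ⟨ΦΩ, hΦΩs, hΦΩe⟩ := exists_hat Ω hΩs hΩbil.1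
  have part1 : ∀ q, ∀ v ∈ D q,
      ω (ι q) (fderiv ℝ ι q v) + fderiv ℝ (fun y => Real.log (f y)) q v = 0 := by
    intro q v hv
    set P : Q' → (Q' →L[ℝ] N) := fderiv ℝ π with hPdef
    set J : Q' → (Q' →L[ℝ] E) := fderiv ℝ ι with hJdef
    set P' : Q' →L[ℝ] (Q' →L[ℝ] N) := fderiv ℝ P q with hP'def
    set J' : Q' →L[ℝ] (Q' →L[ℝ] E) := fderiv ℝ J q with hJ'def
    clear_value P' J'
    have hPc : ContDiff ℝ (⊤ : ℕ∞) P := hπ.fderiv_right (by simp)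
    have hJc : ContDiff ℝ (⊤ : ℕ∞) J := hι.fderiv_right (by simp)
    have hPd : ∀ y, HasFDerivAt π (P y) y := fun y => (hπ.differentiable (by simp) y).hasFDerivAt
    have hJd : ∀ y, HasFDerivAt ι (J y) y := fun y => (hι.differentiable (by simp) y).hasFDerivAt
    have hP' : HasFDerivAt P P' q := hP'def ▸ (hPc.differentiable (by simp) q).hasFDerivAt
    have hJ' : HasFDerivAt J J' q := hJ'def ▸ (hJc.differentiable (by simp) q).hasFDerivAt
    clear_value P J
    have hPsym : ∀ a c : Q', P' a c = P' c a := fun a c =>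
      second_derivative_symmetric hPd hP' a c
    have hJsym : ∀ a c : Q', J' a c = J' c a := fun a c =>
      second_derivative_symmetric hJd hJ' a c
    have hAP : ∀ a : Q', HasFDerivAt (fun y => P y a)
        ((ContinuousLinearMap.apply ℝ N a).comp P') q :=
      fun a => (ContinuousLinearMap.apply ℝ N a).hasFDerivAt.comp q hP'
    have hAJ : ∀ a : Q', HasFDerivAt (fun y => J y a)
        ((ContinuousLinearMap.apply ℝ E a).comp J') q :=
      fun a => (ContinuousLinearMap.apply ℝ E a).hasFDerivAt.comp q hJ'
    have hfd : HasFDerivAt f (fderiv ℝ f q) q := (hf.differentiable (by simp) q).hasFDerivAt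
    have key : ∀ a b c : Q',
        fderiv ℝ Φτ (π q) (P q c) (P q a) (P q b)
          + Φτ (π q) (P' c a) (P q b) + Φτ (π q) (P q a) (P' c b)
        = fderiv ℝ f q c * ΦΩ (ι q) (J q a) (J q b)
          + f q * (fderiv ℝ ΦΩ (ι q) (J q c) (J q a) (J q b)
            + ΦΩ (ι q) (J' c a) (J q b) + ΦΩ (ι q) (J q a) (J' c b)) := by
      intro a b c
      obtain ⟨L1, h1, e1⟩ := hat_hasFDerivAt Φτ hΦτs (hPd q) (hAP a) (hAP b)
      obtain ⟨L2, h2, e2⟩ := hat_hasFDerivAt ΦΩ hΦΩs (hJd q) (hAJ a) (hAJ b)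
      have h2' : HasFDerivAt (fun y => f y * ΦΩ (ι y) (J y a) (J y b))
          (f q • L2 + (ΦΩ (ι q) (J q a) (J q b)) • fderiv ℝ f q) q := hfd.mul h2
      have hfun : (fun y => Φτ (π y) (P y a) (P y b))
          = fun y => f y * ΦΩ (ι y) (J y a) (J y b) := by
        funext y
        rw [hΦτe, hΦΩe]
        exact hπτ y a b
      have h1' : HasFDerivAt (fun y => f y * ΦΩ (ι y) (J y a) (J y b)) L1 q := hfun ▸ h1
      have hLL : L1 = f q • L2 + (ΦΩ (ι q) (J q a) (J q b)) • fderiv ℝ f q := h1'.unique h2'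
      have hc := congrArg (fun L : Q' →L[ℝ] ℝ => L c) hLL
      simp only [ContinuousLinearMap.add_apply, ContinuousLinearMap.smul_apply,
        smul_eq_mul] at hc
      rw [e1 c, e2 c] at hc
      simp only [ContinuousLinearMap.comp_apply, ContinuousLinearMap.apply_apply] at hc
      linear_combination hc
    have hPv : P q v = 0 := by
      have hm : v ∈ LinearMap.ker ((P q : Q' →L[ℝ] N) : Q' →ₗ[ℝ] N) := by
        rw [hker q]; exact hv
      simpa using hm
    have hΩv : ∀ w, Ω (ι q) (J q v) (J q w) = 0 := (hD q v).1 hv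
    have hfΦ : ∀ a b c : E, fderiv ℝ (fun z => Ω z a b) (ι q) c = fderiv ℝ ΦΩ (ι q) c a b := by
      intro a b c
      rw [show (fun z => Ω z a b) = fun z => ΦΩ z a b from funext fun z => (hΦΩe z a b).symm]
      exact fderiv_hat_apply ΦΩ hΦΩs (ι q) a b c
    -- pick u, w with Ω (ι q) (J q u) (J q w) ≠ 0
    obtain ⟨a0, ha0⟩ : ∃ a : N, a ≠ 0 :=
      (Module.finrank_pos_iff_exists_ne_zero (R := ℝ) (M := N)).mp (by omega)
    obtain ⟨b0, hb0⟩ := hτnd (π q) a0 ha0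
    obtain ⟨u, hu⟩ := hπsub q a0
    obtain ⟨w, hw⟩ := hπsub q b0
    have hC : Ω (ι q) (J q u) (J q w) ≠ 0 := by
      intro h0
      apply hb0
      rw [← hu, ← hw, hπτ q u w]
      show f q * Ω (ι q) (J q u) (J q w) = 0
      rw [h0, mul_zero]
    -- the three instances of the key identity
    have K1 := key u w v
    have K2 := key v w u
    have K3 := key v u w
    simp only [hPv, map_zero, ContinuousLinearMap.zero_apply] at K1 K2 K3
    have esym1 : Φτ (π q) (P' v u) (P q w) = Φτ (π q) (P' u v) (P q w) := by rw [hPsym v u]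
    have ealt1 : Φτ (π q) (P q u) (P' v w) + Φτ (π q) (P' w v) (P q u) = 0 := by
      rw [hPsym w v, hΦτe, hΦτe, hτbil.2 (π q) (P q u) (P' v w)]
      ring
    have eΦ1 : ΦΩ (ι q) (J' v u) (J q w) = ΦΩ (ι q) (J' u v) (J q w) := by rw [hJsym v u]
    have eΦ2 : ΦΩ (ι q) (J q u) (J' v w) + ΦΩ (ι q) (J' w v) (J q u) = 0 := by
      rw [hJsym w v, hΦΩe, hΦΩe, hΩbil.2 (ι q) (J q u) (J' v w)]
      ring
    have eΦ3 : ΦΩ (ι q) (J q v) (J' u w) = ΦΩ (ι q) (J q v) (J' w u) := by rw [hJsym u w]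
    have eΩ1' : ΦΩ (ι q) (J q v) (J q w) = 0 := by rw [hΦΩe]; exact hΩv w
    have eΩ2' : ΦΩ (ι q) (J q v) (J q u) = 0 := by rw [hΦΩe]; exact hΩv u
    have eC : ΦΩ (ι q) (J q u) (J q w) = Ω (ι q) (J q u) (J q w) := hΦΩe _ _ _
    have d2eq : fderiv ℝ ΦΩ (ι q) (J q v) (J q u) (J q w)
        - fderiv ℝ ΦΩ (ι q) (J q u) (J q v) (J q w)
        + fderiv ℝ ΦΩ (ι q) (J q w) (J q v) (J q u)
        = ω (ι q) (J q v) * Ω (ι q) (J q u) (J q w) := by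
      have h := hΩd2 (ι q) (J q v) (J q u) (J q w)
      simp only [d2, wedge12] at h
      simp only [hfΦ] at h
      rw [hΩv w, hΩv u] at h
      linear_combination h
    have main : fderiv ℝ f q v * Ω (ι q) (J q u) (J q w)
        + f q * ω (ι q) (J q v) * Ω (ι q) (J q u) (J q w) = 0 := by
      linear_combination (-1 : ℝ) * K1 + K2 - K3 + esym1 + ealt1 - f q * eΦ1 - f q * eΦ2
        + f q * eΦ3 - f q * d2eq + fderiv ℝ f q u * eΩ1' - fderiv ℝ f q w * eΩ2'
        - fderiv ℝ f q v * eC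
    have hmain2 : fderiv ℝ f q v + f q * ω (ι q) (J q v) = 0 := by
      have h' : (fderiv ℝ f q v + f q * ω (ι q) (J q v)) * Ω (ι q) (J q u) (J q w) = 0 := by
        linear_combination main
      rcases mul_eq_zero.mp h' with h | h
      · exact h
      · exact absurd h hC
    have hlog : fderiv ℝ (fun y => Real.log (f y)) q = (f q)⁻¹ • fderiv ℝ f q :=
      (hfd.log (ne_of_gt (hfpos q))).fderiv
    rw [hlog]
    have hfne : f q ≠ 0 := ne_of_gt (hfpos q)
    simp only [ContinuousLinearMap.smul_apply, smul_eq_mul]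
    field_simp
    linarith [hmain2]
  refine ⟨part1, ?_⟩
  classical
  have hA1mem : TangVanish D (fun x (v : Fin 1 → Q') =>
      ω (ι x) (fderiv ℝ ι x (v 0)) + fderiv ℝ (fun y => Real.log (f y)) x (v 0)) :=
    fun x v hv => part1 x (v 0) (hv 0)
  have hsm : SmoothForm (fun x (_ : Fin 0 → Q') => -Real.log (f x)) := by
    constructor
    · intro v
      exact (hf.log fun x => ne_of_gt (hfpos x)).neg
    · intro x
      refine ⟨AlternatingMap.constOfIsEmpty ℝ Q' (Fin 0) (-Real.log (f x)), ?_⟩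
      funext v
      rfl
  have hA2mem : (fun x (v : Fin 1 → Q') =>
      extD (fun y (_ : Fin 0 → Q') => -Real.log (f y)) x fun i => v (Fin.cast rfl i)) ∈
      {σ : DForm Q' 1 | ∃ (p : ℕ) (h : p + 1 = 1) (α : DForm Q' p), SmoothForm α ∧
        σ = fun x v => extD α x fun i => v (Fin.cast h i)} :=
    ⟨0, rfl, _, hsm, rfl⟩
  have hsplit : (fun q (v : Fin 1 → Q') => ω (ι q) (fderiv ℝ ι q (v 0)))
      = (fun x (v : Fin 1 → Q') =>
          ω (ι x) (fderiv ℝ ι x (v 0)) + fderiv ℝ (fun y => Real.log (f y)) x (v 0))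
        + fun x (v : Fin 1 → Q') =>
          extD (fun y (_ : Fin 0 → Q') => -Real.log (f y)) x fun i => v (Fin.cast rfl i) := by
    funext x v
    have hex : extD (fun y (_ : Fin 0 → Q') => -Real.log (f y)) x (fun i => v (Fin.cast rfl i))
        = -(fderiv ℝ (fun y => Real.log (f y)) x (v 0)) := by
      simp only [extD, Fin.sum_univ_one, pow_zero, one_mul]
      rw [show (fderiv ℝ (fun y => -Real.log (f y)) x)
          = -fderiv ℝ (fun y => Real.log (f y)) x from fderiv_neg]
      simp
    show ω (ι x) (fderiv ℝ ι x (v 0))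
        = (ω (ι x) (fderiv ℝ ι x (v 0)) + fderiv ℝ (fun y => Real.log (f y)) x (v 0))
          + extD (fun y (_ : Fin 0 → Q') => -Real.log (f y)) x (fun i => v (Fin.cast rfl i))
    rw [hex]
    ring
  rw [hsplit]
  exact add_mem (AddSubgroup.subset_closure (Or.inl hA1mem))
    (AddSubgroup.subset_closure (Or.inr hA2mem))
end
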